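/- arXiv:math/0510662 — 5 statements merged into one kernel-verified Lean document; each statement's English description precedes it below -/
import Mathlib

section
/- Among all strategies P (measurable choices ν_i = ν_i(x_1,…,x_{i-1}) with values in [-1/(1-ρ), 1/ρ]) in the n-round biased-coin game, the Bayesian strategy ν_i = (p̂_i^Q - ρ)/(ρ(1-ρ)) maximizes the Q-expected log capital E_Q[log K_n^P(ξⁿ)]. -/
open Finset

/-- Cylinder probability of paths agreeing with `ξ` on the first `i` coordinates. -/
noncomputable def cyl {n : ℕ} (Q : (Fin n → Bool) → ℝ) (ξ : Fin n → Bool) (i : ℕ) : ℝ :=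
  ∑ η ∈ univ.filter (fun η : Fin n → Bool => ∀ j : Fin n, (j : ℕ) < i → η j = ξ j), Q η

/-- Conditional probability under `Q` of heads at round `i` given the past of `ξ`. -/
noncomputable def pHat {n : ℕ} (Q : (Fin n → Bool) → ℝ) (ξ : Fin n → Bool) (i : Fin n) : ℝ :=
  (∑ η ∈ univ.filter (fun η : Fin n → Bool =>
      (∀ j : Fin n, (j : ℕ) < (i : ℕ) → η j = ξ j) ∧ η i = true), Q η) / cyl Q ξ i

/-- Capital after `n` rounds when Skeptic plays `ν = σ` against Reality's path `ξ`
(`true` = heads = `1-ρ`). -/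
noncomputable def capital {n : ℕ} (ρ : ℝ) (σ : Fin n → (Fin n → Bool) → ℝ)
    (ξ : Fin n → Bool) : ℝ :=
  ∏ i : Fin n, (1 + σ i ξ * (if ξ i then 1 - ρ else -ρ))

/-- Extended-real logarithm, with `elog x = ⊥` for `x ≤ 0` (so that capital `0` gives
log-capital `-∞`, while `0 ⬝ elog 0 = 0` in `EReal` realizes the convention `0·log 0 = 0`
on `Q`-null paths). -/
noncomputable def elog (x : ℝ) : EReal := if x ≤ 0 then ⊥ else (Real.log x : EReal)

/- ------------------- auxiliary lemmas ------------------- -/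

private lemma ecoe_sum {α : Type*} (s : Finset α) (f : α → ℝ) :
    ((∑ i ∈ s, f i : ℝ) : EReal) = ∑ i ∈ s, (f i : EReal) :=
  map_sum (⟨⟨Real.toEReal, EReal.coe_zero⟩, EReal.coe_add⟩ : ℝ →+ EReal) f s

/-- Splitting the cylinder set at coordinate `k`. -/
private lemma cyl_step {n : ℕ} (ξ : Fin n → Bool) (k : ℕ) (hk : k < n) (b : Bool) :
    (univ.filter fun η : Fin n → Bool => ∀ j : Fin n, (j : ℕ) < k → η j = ξ j).filter
        (fun η => η ⟨k, hk⟩ = b)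
      = univ.filter (fun η : Fin n → Bool =>
          ∀ j : Fin n, (j : ℕ) < k + 1 → η j = Function.update ξ ⟨k, hk⟩ b j) := by
  ext η
  simp only [mem_filter, mem_univ, true_and]
  constructor
  · rintro ⟨h1, h2⟩ j hj
    rcases Nat.lt_or_ge (j : ℕ) k with h | h
    · rw [Function.update_of_ne (Fin.ne_of_val_ne (show (j : ℕ) ≠ k by omega)), h1 j h]
    · have hj' : j = (⟨k, hk⟩ : Fin n) := Fin.ext (show (j : ℕ) = k by omega)
      rw [hj', Function.update_self]
      exact h2
  · intro h
    refine ⟨fun j hj => ?_, ?_⟩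
    · have := h j (by omega)
      rwa [Function.update_of_ne (Fin.ne_of_val_ne (show (j : ℕ) ≠ k by omega))] at this
    · have := h ⟨k, hk⟩ (by simp)
      rwa [Function.update_self] at this

private lemma filter_ge_eq_insert {n k : ℕ} (hk : k < n) :
    (univ.filter fun i : Fin n => k ≤ (i : ℕ))
      = insert ⟨k, hk⟩ (univ.filter fun i : Fin n => k + 1 ≤ (i : ℕ)) := by
  ext i
  simp only [mem_filter, mem_univ, true_and, mem_insert, Fin.ext_iff]
  omega

/-- The key combinatorial identity: the sum over a cylinder of the product of the
adapted one-step factors equals `1`. -/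
private lemma sum_prod_adapted {n : ℕ} (F : Fin n → (Fin n → Bool) → ℝ)
    (hdep : ∀ i : Fin n, ∀ ξ η : Fin n → Bool,
      (∀ j : Fin n, (j : ℕ) ≤ (i : ℕ) → ξ j = η j) → F i ξ = F i η)
    (hsum : ∀ i : Fin n, ∀ ξ : Fin n → Bool,
      F i (Function.update ξ i true) + F i (Function.update ξ i false) = 1) :
    ∀ m k, k + m = n → ∀ ξ : Fin n → Bool,
      ∑ η ∈ univ.filter (fun η : Fin n → Bool => ∀ j : Fin n, (j : ℕ) < k → η j = ξ j),
        ∏ i ∈ univ.filter (fun i : Fin n => k ≤ (i : ℕ)), F i η = 1 := by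
  intro m
  induction m with
  | zero =>
    intro k hk ξ
    have hkn : n = k := by omega
    subst hkn
    have h1 : (univ.filter fun i : Fin n => n ≤ (i : ℕ)) = ∅ := by
      apply Finset.filter_eq_empty_iff.2
      intro i _
      exact not_le.2 i.isLt
    have h2 : (univ.filter fun η : Fin n → Bool => ∀ j : Fin n, (j : ℕ) < n → η j = ξ j)
        = {ξ} := by
      ext η
      simp only [mem_filter, mem_univ, true_and, mem_singleton]
      constructor
      · intro h
        funext j
        exact h j j.isLt
      · rintro rfl j _
        rfl
    rw [h1, h2]
    simp
  | succ m ih =>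
    intro k hk ξ
    have hkn : k < n := by omega
    set K : Fin n := ⟨k, hkn⟩ with hK
    have hprod : ∀ η : Fin n → Bool,
        ∏ i ∈ univ.filter (fun i : Fin n => k ≤ (i : ℕ)), F i η
          = F K η * ∏ i ∈ univ.filter (fun i : Fin n => k + 1 ≤ (i : ℕ)), F i η := by
      intro η
      rw [filter_ge_eq_insert hkn, prod_insert (by simp)]
    have hpart : ∀ b : Bool,
        ∑ η ∈ (univ.filter fun η : Fin n → Bool =>
            ∀ j : Fin n, (j : ℕ) < k → η j = ξ j).filter (fun η => η K = b),
          ∏ i ∈ univ.filter (fun i : Fin n => k ≤ (i : ℕ)), F i η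
        = F K (Function.update ξ K b) := by
      intro b
      rw [cyl_step ξ k hkn b]
      have hcongr : ∀ η ∈ univ.filter (fun η : Fin n → Bool =>
          ∀ j : Fin n, (j : ℕ) < k + 1 → η j = Function.update ξ K b j),
          ∏ i ∈ univ.filter (fun i : Fin n => k ≤ (i : ℕ)), F i η
            = F K (Function.update ξ K b)
              * ∏ i ∈ univ.filter (fun i : Fin n => k + 1 ≤ (i : ℕ)), F i η := by
        intro η hη
        rw [hprod η]
        congr 1
        apply hdep
        intro j hj
        have hj' : (j : ℕ) ≤ k := hj
        simp only [mem_filter, mem_univ, true_and] at hη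
        exact hη j (by omega)
      rw [Finset.sum_congr rfl hcongr, ← mul_sum, ih (k + 1) (by omega) (Function.update ξ K b),
        mul_one]
    have hsplit := Finset.sum_filter_add_sum_filter_not
      (univ.filter fun η : Fin n → Bool => ∀ j : Fin n, (j : ℕ) < k → η j = ξ j)
      (fun η => η K = true)
      (fun η => ∏ i ∈ univ.filter (fun i : Fin n => k ≤ (i : ℕ)), F i η)
    have hfalse : (univ.filter fun η : Fin n → Bool =>
          ∀ j : Fin n, (j : ℕ) < k → η j = ξ j).filter (fun η => ¬ η K = true)
        = (univ.filter fun η : Fin n → Bool =>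
          ∀ j : Fin n, (j : ℕ) < k → η j = ξ j).filter (fun η => η K = false) := by
      apply Finset.filter_congr
      intro η _
      simp
    rw [← hsplit, hfalse, hpart true, hpart false, hsum K ξ]

private lemma cyl_zero {n : ℕ} (Q : (Fin n → Bool) → ℝ) (ξ : Fin n → Bool) :
    cyl Q ξ 0 = ∑ η : Fin n → Bool, Q η := by
  unfold cyl
  congr 1
  apply Finset.filter_true_of_mem
  intro η _ j hj
  omega

private lemma cyl_self {n : ℕ} (Q : (Fin n → Bool) → ℝ) (ξ : Fin n → Bool) :
    cyl Q ξ n = Q ξ := by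
  unfold cyl
  have : (univ.filter fun η : Fin n → Bool => ∀ j : Fin n, (j : ℕ) < n → η j = ξ j) = {ξ} := by
    ext η
    simp only [mem_filter, mem_univ, true_and, mem_singleton]
    constructor
    · intro h
      funext j
      exact h j j.isLt
    · rintro rfl j _
      rfl
  rw [this, Finset.sum_singleton]

private lemma cyl_pos {n : ℕ} (Q : (Fin n → Bool) → ℝ) (hQ0 : ∀ η, 0 ≤ Q η)
    (ξ : Fin n → Bool) (hξ : 0 < Q ξ) (k : ℕ) : 0 < cyl Q ξ k := by
  have hmem : ξ ∈ univ.filter (fun η : Fin n → Bool => ∀ j : Fin n, (j : ℕ) < k → η j = ξ j) := by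
    simp
  calc 0 < Q ξ := hξ
    _ ≤ cyl Q ξ k := Finset.single_le_sum (fun η _ => hQ0 η) hmem

/-- The one-step factor of the Bayes strategy, times the risk-neutral weight,
is the ratio of consecutive cylinder probabilities. -/
private lemma bayes_factor {n : ℕ} (ρ : ℝ) (hρ0 : 0 < ρ) (hρ1 : ρ < 1)
    (Q : (Fin n → Bool) → ℝ) (ξ : Fin n → Bool) (i : Fin n)
    (hc : cyl Q ξ (i : ℕ) ≠ 0) :
    (if ξ i then ρ else 1 - ρ)
        * (1 + (pHat Q ξ i - ρ) / (ρ * (1 - ρ)) * (if ξ i then 1 - ρ else -ρ))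
      = cyl Q ξ ((i : ℕ) + 1) / cyl Q ξ (i : ℕ) := by
  have hIK : (⟨(i : ℕ), i.isLt⟩ : Fin n) = i := rfl
  -- numerator of pHat as a double filter
  have hnum : (univ.filter fun η : Fin n → Bool =>
        (∀ j : Fin n, (j : ℕ) < (i : ℕ) → η j = ξ j) ∧ η i = true)
      = (univ.filter fun η : Fin n → Bool =>
          ∀ j : Fin n, (j : ℕ) < (i : ℕ) → η j = ξ j).filter (fun η => η i = true) := by
    rw [Finset.filter_filter]
  set A := univ.filter fun η : Fin n → Bool => ∀ j : Fin n, (j : ℕ) < (i : ℕ) → η j = ξ j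
    with hA
  set N : ℝ := ∑ η ∈ A.filter (fun η => η i = true), Q η with hN
  have hpHat : pHat Q ξ i = N / cyl Q ξ (i : ℕ) := by
    unfold pHat
    rw [hnum]
  have hsplit : cyl Q ξ (i : ℕ)
      = N + ∑ η ∈ A.filter (fun η => η i = false), Q η := by
    have h1 := Finset.sum_filter_add_sum_filter_not A (fun η => η i = true) Q
    have h2 : A.filter (fun η => ¬ η i = true) = A.filter (fun η => η i = false) := by
      apply Finset.filter_congr; intro η _; simp
    rw [h2] at h1
    unfold cyl
    rw [← hA, ← h1, hN]
  have hnext : cyl Q ξ ((i : ℕ) + 1) = ∑ η ∈ A.filter (fun η => η i = ξ i), Q η := by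
    have := cyl_step ξ (i : ℕ) i.isLt (ξ i)
    rw [hIK, Function.update_eq_self] at this
    unfold cyl
    rw [← this]
  have hρ1' : (1 : ℝ) - ρ ≠ 0 := by linarith
  have hρ0' : ρ ≠ 0 := ne_of_gt hρ0
  cases hb : ξ i with
  | true =>
    have hnext' : cyl Q ξ ((i : ℕ) + 1) = N := by rw [hnext, hb, hN]
    rw [hb] at *
    simp only [if_true, hpHat, hnext']
    field_simp
    ring
  | false =>
    have hnext' : cyl Q ξ ((i : ℕ) + 1) = cyl Q ξ (i : ℕ) - N := by
      rw [hnext, hb]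
      rw [hsplit]
      ring
    rw [hb] at *
    simp only [if_false, Bool.false_eq_true, hpHat, hnext']
    field_simp
    ring

/-- Telescoping: product of weighted Bayes factors from round `k` on. -/
private lemma bayes_prod {n : ℕ} (ρ : ℝ) (hρ0 : 0 < ρ) (hρ1 : ρ < 1)
    (Q : (Fin n → Bool) → ℝ) (hQ0 : ∀ η, 0 ≤ Q η) (ξ : Fin n → Bool) (hξ : 0 < Q ξ) :
    ∀ m k, k + m = n →
      ∏ i ∈ univ.filter (fun i : Fin n => k ≤ (i : ℕ)),
        ((if ξ i then ρ else 1 - ρ)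
          * (1 + (pHat Q ξ i - ρ) / (ρ * (1 - ρ)) * (if ξ i then 1 - ρ else -ρ)))
      = Q ξ / cyl Q ξ k := by
  intro m
  induction m with
  | zero =>
    intro k hk
    have hkn : n = k := by omega
    subst hkn
    have h1 : (univ.filter fun i : Fin n => n ≤ (i : ℕ)) = ∅ := by
      apply Finset.filter_eq_empty_iff.2
      intro i _
      exact not_le.2 i.isLt
    rw [h1, Finset.prod_empty, cyl_self, div_self (ne_of_gt hξ)]
  | succ m ih =>
    intro k hk
    have hkn : k < n := by omega
    set K : Fin n := ⟨k, hkn⟩ with hK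
    have hck : cyl Q ξ k ≠ 0 := ne_of_gt (cyl_pos Q hQ0 ξ hξ k)
    have hck1 : cyl Q ξ (k + 1) ≠ 0 := ne_of_gt (cyl_pos Q hQ0 ξ hξ (k + 1))
    rw [filter_ge_eq_insert hkn, prod_insert (by simp), ih (k + 1) (by omega),
      bayes_factor ρ hρ0 hρ1 Q ξ K hck]
    show cyl Q ξ (k + 1) / cyl Q ξ k * (Q ξ / cyl Q ξ (k + 1)) = Q ξ / cyl Q ξ k
    field_simp

/-- Capital is nonnegative for strategies obeying the bound. -/
private lemma capital_nonneg {n : ℕ} (ρ : ℝ) (hρ0 : 0 < ρ) (hρ1 : ρ < 1)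
    (σ : Fin n → (Fin n → Bool) → ℝ)
    (hbdd : ∀ i ξ, σ i ξ ∈ Set.Icc (-(1/(1-ρ))) (1/ρ)) (ξ : Fin n → Bool) :
    0 ≤ capital ρ σ ξ := by
  apply Finset.prod_nonneg
  intro i _
  obtain ⟨hlo, hhi⟩ := hbdd i ξ
  have h1 : (0 : ℝ) < 1 - ρ := by linarith
  cases hb : ξ i with
  | true =>
    simp only [if_true]
    have h2 : (1 - ρ) * (1 / (1 - ρ)) = 1 := mul_one_div_cancel (ne_of_gt h1)
    nlinarith [mul_le_mul_of_nonneg_right hlo (le_of_lt h1)]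
  | false =>
    simp only [Bool.false_eq_true, if_false]
    have h2 : ρ * (1 / ρ) = 1 := mul_one_div_cancel (ne_of_gt hρ0)
    nlinarith [mul_le_mul_of_nonneg_right hhi (le_of_lt hρ0)]

/-- Martingale property: the risk-neutral expectation of the capital is `1`. -/
private lemma martingale {n : ℕ} (ρ : ℝ) (hρ0 : 0 < ρ) (hρ1 : ρ < 1)
    (σ : Fin n → (Fin n → Bool) → ℝ)
    (hadapted : ∀ i : Fin n, ∀ ξ η : Fin n → Bool,
      (∀ j : Fin n, (j : ℕ) < (i : ℕ) → ξ j = η j) → σ i ξ = σ i η) :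
    ∑ ξ : Fin n → Bool,
      (∏ i : Fin n, (if ξ i then ρ else 1 - ρ)) * capital ρ σ ξ = 1 := by
  set F : Fin n → (Fin n → Bool) → ℝ :=
    fun i ξ => (if ξ i then ρ else 1 - ρ) * (1 + σ i ξ * (if ξ i then 1 - ρ else -ρ)) with hF
  have hdep : ∀ i : Fin n, ∀ ξ η : Fin n → Bool,
      (∀ j : Fin n, (j : ℕ) ≤ (i : ℕ) → ξ j = η j) → F i ξ = F i η := by
    intro i ξ η h
    have hσ : σ i ξ = σ i η := hadapted i ξ η (fun j hj => h j (le_of_lt hj))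
    have hi : ξ i = η i := h i le_rfl
    simp only [hF, hσ, hi]
  have hsum : ∀ i : Fin n, ∀ ξ : Fin n → Bool,
      F i (Function.update ξ i true) + F i (Function.update ξ i false) = 1 := by
    intro i ξ
    have hσ : σ i (Function.update ξ i true) = σ i (Function.update ξ i false) := by
      apply hadapted
      intro j hj
      have hji : j ≠ i := by
        intro h; rw [h] at hj; omega
      rw [Function.update_of_ne hji, Function.update_of_ne hji]
    simp only [hF, Function.update_self, hσ, Bool.false_eq_true, if_true, if_false]
    ring
  have key := sum_prod_adapted F hdep hsum n 0 (by omega) (fun _ => true)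
  have hfilter1 : (univ.filter fun η : Fin n → Bool =>
      ∀ j : Fin n, (j : ℕ) < 0 → η j = true) = univ := by
    apply Finset.filter_true_of_mem
    intro η _ j hj
    omega
  have hfilter2 : (univ.filter fun i : Fin n => 0 ≤ (i : ℕ)) = univ := by
    apply Finset.filter_true_of_mem
    intro i _
    omega
  rw [hfilter1, hfilter2] at key
  have hFcap : ∀ ξ : Fin n → Bool,
      (∏ i : Fin n, (if ξ i then ρ else 1 - ρ)) * capital ρ σ ξ = ∏ i : Fin n, F i ξ := by
    intro ξ
    unfold capital
    rw [← Finset.prod_mul_distrib]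
  rw [Finset.sum_congr rfl (fun ξ _ => hFcap ξ)]
  exact key

/-- The Bayes capital equals `Q ξ` divided by the risk neutral weight, on the support. -/
private lemma bayes_capital_eq {n : ℕ} (ρ : ℝ) (hρ0 : 0 < ρ) (hρ1 : ρ < 1)
    (Q : (Fin n → Bool) → ℝ) (hQ0 : ∀ η, 0 ≤ Q η) (hQ1 : ∑ η : Fin n → Bool, Q η = 1)
    (ξ : Fin n → Bool) (hξ : 0 < Q ξ) :
    (∏ i : Fin n, (if ξ i then ρ else 1 - ρ))
        * capital ρ (fun i ξ' => (pHat Q ξ' i - ρ) / (ρ * (1 - ρ))) ξ = Q ξ := by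
  have key := bayes_prod ρ hρ0 hρ1 Q hQ0 ξ hξ n 0 (by omega)
  have hfilter2 : (univ.filter fun i : Fin n => 0 ≤ (i : ℕ)) = univ := by
    apply Finset.filter_true_of_mem
    intro i _
    omega
  rw [hfilter2] at key
  have hc0 : cyl Q ξ 0 = 1 := by rw [cyl_zero, hQ1]
  rw [hc0, div_one] at key
  rw [← key]
  unfold capital
  rw [← Finset.prod_mul_distrib]

private lemma wgt_pos {n : ℕ} (ρ : ℝ) (hρ0 : 0 < ρ) (hρ1 : ρ < 1) (ξ : Fin n → Bool) :
    0 < ∏ i : Fin n, (if ξ i then ρ else 1 - ρ) := by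
  apply Finset.prod_pos
  intro i _
  cases ξ i <;> simp <;> linarith

/-- Theorem 1: among all adapted strategies with `ν_i ∈ [-1/(1-ρ), 1/ρ]`, the Bayesian
strategy `ν_i = (p̂_i^Q - ρ)/(ρ(1-ρ))` maximizes the `Q`-expected log capital. -/
theorem bayes_strategy_optimal {n : ℕ} (ρ : ℝ) (hρ0 : 0 < ρ) (hρ1 : ρ < 1)
    (Q : (Fin n → Bool) → ℝ) (hQ0 : ∀ η, 0 ≤ Q η) (hQ1 : ∑ η : Fin n → Bool, Q η = 1)
    (σ : Fin n → (Fin n → Bool) → ℝ)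
    (hadapted : ∀ i : Fin n, ∀ ξ η : Fin n → Bool,
      (∀ j : Fin n, (j : ℕ) < (i : ℕ) → ξ j = η j) → σ i ξ = σ i η)
    (hbdd : ∀ i ξ, σ i ξ ∈ Set.Icc (-(1/(1-ρ))) (1/ρ)) :
    ∑ ξ : Fin n → Bool, (Q ξ : EReal) * elog (capital ρ σ ξ)
      ≤ ∑ ξ : Fin n → Bool,
          (Q ξ : EReal) * elog (capital ρ (fun i ξ' => (pHat Q ξ' i - ρ) / (ρ * (1 - ρ))) ξ) := by
  set B : Fin n → (Fin n → Bool) → ℝ := fun i ξ' => (pHat Q ξ' i - ρ) / (ρ * (1 - ρ)) with hB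
  by_cases hbad : ∃ ξ : Fin n → Bool, 0 < Q ξ ∧ capital ρ σ ξ ≤ 0
  · obtain ⟨ξ₀, hq, hc⟩ := hbad
    have hterm : (Q ξ₀ : EReal) * elog (capital ρ σ ξ₀) = ⊥ := by
      rw [elog, if_pos hc]
      exact EReal.coe_mul_bot_of_pos hq
    have hbot : ∑ ξ : Fin n → Bool, (Q ξ : EReal) * elog (capital ρ σ ξ) = ⊥ := by
      rw [← Finset.add_sum_erase _ _ (mem_univ ξ₀), hterm, EReal.bot_add]
    rw [hbot]
    exact bot_le
  · push_neg at hbad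
    -- positivity on the support
    have hσpos : ∀ ξ : Fin n → Bool, 0 < Q ξ → 0 < capital ρ σ ξ := hbad
    have hwpos := wgt_pos (n := n) ρ hρ0 hρ1
    have hBpos : ∀ ξ : Fin n → Bool, 0 < Q ξ → 0 < capital ρ B ξ := by
      intro ξ hξ
      have h := bayes_capital_eq ρ hρ0 hρ1 Q hQ0 hQ1 ξ hξ
      rw [← hB] at h
      nlinarith [hwpos ξ, h, hξ]
    -- convert both sums to real sums
    have key : ∀ τ : Fin n → (Fin n → Bool) → ℝ, (∀ ξ, 0 < Q ξ → 0 < capital ρ τ ξ) →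
        ∑ ξ : Fin n → Bool, (Q ξ : EReal) * elog (capital ρ τ ξ)
          = ((∑ ξ : Fin n → Bool, Q ξ * Real.log (capital ρ τ ξ) : ℝ) : EReal) := by
      intro τ hτ
      rw [ecoe_sum]
      apply Finset.sum_congr rfl
      intro ξ _
      rcases eq_or_lt_of_le (hQ0 ξ) with h | h
      · rw [← h]
        simp [EReal.zero_mul]
      · rw [elog, if_neg (not_le.2 (hτ ξ h)), ← EReal.coe_mul]
    rw [key σ hσpos, key B hBpos, EReal.coe_le_coe_iff]
    -- the real inequality
    have hmart := martingale ρ hρ0 hρ1 σ hadapted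
    calc ∑ ξ : Fin n → Bool, Q ξ * Real.log (capital ρ σ ξ)
        ≤ ∑ ξ : Fin n → Bool, (Q ξ * Real.log (capital ρ B ξ)
            + ((∏ i : Fin n, (if ξ i then ρ else 1 - ρ)) * capital ρ σ ξ - Q ξ)) := by
          apply Finset.sum_le_sum
          intro ξ _
          rcases eq_or_lt_of_le (hQ0 ξ) with h | h
          · rw [← h]
            have : 0 ≤ (∏ i : Fin n, (if ξ i then ρ else 1 - ρ)) * capital ρ σ ξ :=
              mul_nonneg (hwpos ξ).le (capital_nonneg ρ hρ0 hρ1 σ hbdd ξ)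
            simp only [zero_mul, zero_add, sub_zero]
            linarith
          · have hcσ := hσpos ξ h
            have hcB := hBpos ξ h
            have hlog := Real.log_le_sub_one_of_pos (div_pos hcσ hcB)
            rw [Real.log_div (ne_of_gt hcσ) (ne_of_gt hcB)] at hlog
            have heq : Q ξ * (capital ρ σ ξ / capital ρ B ξ)
                = (∏ i : Fin n, (if ξ i then ρ else 1 - ρ)) * capital ρ σ ξ := by
              have hkey := bayes_capital_eq ρ hρ0 hρ1 Q hQ0 hQ1 ξ h
              rw [← hB] at hkey
              rw [← hkey]
              field_simp
            nlinarith [mul_le_mul_of_nonneg_left hlog (le_of_lt h)]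
      _ = ∑ ξ : Fin n → Bool, Q ξ * Real.log (capital ρ B ξ)
            + ((∑ ξ : Fin n → Bool, (∏ i : Fin n, (if ξ i then ρ else 1 - ρ)) * capital ρ σ ξ)
              - ∑ ξ : Fin n → Bool, Q ξ) := by
          rw [Finset.sum_add_distrib, Finset.sum_sub_distrib]
      _ = ∑ ξ : Fin n → Bool, Q ξ * Real.log (capital ρ B ξ) := by
          rw [hmart, hQ1]
          ring
end

section
/- For every nonnegative integer x, it holds that 0 < log(x!) - [(x + 1/2) log(x+1) - (x+1) + log√(2π)] < 1/(12(x+1)). -/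
open Real Filter Stirling

/-- Strict positivity of the successive difference of `log ∘ stirlingSeq`. -/
lemma log_stirlingSeq_diff_pos (n : ℕ) :
    0 < Real.log (stirlingSeq (n + 1)) - Real.log (stirlingSeq (n + 2)) := by
  have h := Stirling.log_stirlingSeq_diff_hasSum n
  have hpos : ∀ k : ℕ,
      0 < (1 : ℝ) / (2 * ↑(k + 1) + 1) * ((1 / (2 * ↑(n + 1) + 1)) ^ 2) ^ (k + 1) := by
    intro k; positivity
  exact hasSum_lt (f := fun _ : ℕ => (0 : ℝ)) (i := 0)
    (fun k => (hpos k).le) (hpos 0) hasSum_zero h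

/-- Sharp upper bound for the successive difference of `log ∘ stirlingSeq`. -/
lemma log_stirlingSeq_diff_lt (n : ℕ) :
    Real.log (stirlingSeq (n + 1)) - Real.log (stirlingSeq (n + 2)) <
      1 / (12 * ((n : ℝ) + 1)) - 1 / (12 * ((n : ℝ) + 2)) := by
  set u : ℝ := (1 / (2 * ((n : ℕ) + 1 : ℕ) + 1 : ℝ)) ^ 2 with hu
  have hu' : u = (1 / (2 * ((n : ℝ) + 1) + 1)) ^ 2 := by push_cast [hu]; ring_nf
  have hupos : 0 < u := by rw [hu']; positivity
  have hult : u < 1 := by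
    rw [hu', div_pow, one_pow]
    have h1 : (1 : ℝ) < (2 * ((n : ℝ) + 1) + 1) ^ 2 := by nlinarith [Nat.cast_nonneg (α := ℝ) n]
    rw [div_lt_one (by positivity)]; exact h1
  -- geometric comparison sum
  have hgeo : HasSum (fun k : ℕ => (1 / 3 : ℝ) * u ^ (k + 1)) ((1 / 3) * (u / (1 - u))) := by
    have := (hasSum_geometric_of_lt_one hupos.le hult).mul_left ((1 / 3 : ℝ) * u)
    have heq : ∀ k : ℕ, (1 / 3 : ℝ) * u * u ^ k = (1 / 3) * u ^ (k + 1) := by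
      intro k; rw [pow_succ]; ring
    simp_rw [heq] at this
    convert this using 1
    · rfl
    rw [div_eq_mul_inv, div_eq_mul_inv]; ring
  have hsum := Stirling.log_stirlingSeq_diff_hasSum n
  have hle : ∀ k : ℕ,
      (1 : ℝ) / (2 * ↑(k + 1) + 1) * u ^ (k + 1) ≤ (1 / 3) * u ^ (k + 1) := by
    intro k
    have : (1 : ℝ) / (2 * ↑(k + 1) + 1) ≤ 1 / 3 := by
      apply div_le_div_of_nonneg_left (by norm_num) (by norm_num)
      push_cast; linarith [Nat.cast_nonneg (α := ℝ) k]
    exact mul_le_mul_of_nonneg_right this (by positivity)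
  have hlt : Real.log (stirlingSeq (n + 1)) - Real.log (stirlingSeq (n + 2)) <
      (1 / 3) * (u / (1 - u)) := by
    refine hasSum_lt (i := 1) hle ?_ hsum hgeo
    push_cast
    norm_num
    nlinarith [hupos]
  have key : (1/3 : ℝ) * (u / (1 - u)) = 1 / (12 * ((n:ℝ) + 1)) - 1 / (12 * ((n:ℝ) + 2)) := by
    have h1u : (1:ℝ) - u = (4*((n:ℝ)+1)*((n:ℝ)+2))/((2*((n:ℝ)+1)+1)^2) := by
      rw [hu']; field_simp; ring
    rw [h1u, hu']
    have h2 : (2 * ((n : ℝ) + 1) + 1) ^ 2 ≠ 0 := by positivity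
    have h5 : (4*((n:ℝ)+1)*((n:ℝ)+2)) ≠ 0 := by positivity
    field_simp
    ring
  linarith [hlt]

/-- The sequence `log (stirlingSeq (n+1)) - 1/(12(n+1))` is strictly monotone. -/
lemma stirling_aux_strictMono :
    StrictMono (fun n : ℕ => Real.log (stirlingSeq (n + 1)) - 1 / (12 * ((n : ℝ) + 1))) := by
  apply strictMono_nat_of_lt_succ
  intro n
  have h := log_stirlingSeq_diff_lt n
  have e : n + 1 + 1 = n + 2 := rfl
  simp only [e]
  push_cast
  have e2 : ((n:ℝ) + 1 + 1) = (n:ℝ) + 2 := by ring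
  rw [e2]
  linarith

lemma stirling_aux_tendsto :
    Tendsto (fun n : ℕ => Real.log (stirlingSeq (n + 1)) - 1 / (12 * ((n : ℝ) + 1)))
      atTop (nhds (Real.log (Real.sqrt π))) := by
  have h1 : Tendsto (fun n : ℕ => Real.log (stirlingSeq (n + 1))) atTop
      (nhds (Real.log (Real.sqrt π))) := by
    have := Stirling.tendsto_stirlingSeq_sqrt_pi.comp (tendsto_add_atTop_nat 1)
    exact this.log (by positivity)
  have h2 : Tendsto (fun n : ℕ => 1 / (12 * ((n : ℝ) + 1))) atTop (nhds 0) := by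
    have := tendsto_one_div_add_atTop_nhds_zero_nat.const_mul (1 / 12 : ℝ)
    rw [mul_zero] at this
    convert this using 2 with n
    rw [div_mul_div_comm, one_mul, mul_comm]
  simpa using h1.sub h2

lemma log_stirlingSeq_ge (n : ℕ) :
    Real.log (Real.sqrt π) ≤ Real.log (stirlingSeq (n + 1)) := by
  have h1 : Tendsto (fun n : ℕ => Real.log (stirlingSeq (n + 1))) atTop
      (nhds (Real.log (Real.sqrt π))) := by
    have := Stirling.tendsto_stirlingSeq_sqrt_pi.comp (tendsto_add_atTop_nat 1)
    exact this.log (by positivity)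
  exact Stirling.log_stirlingSeq'_antitone.le_of_tendsto h1 n

/-- Two-sided Stirling bound for the factorial: for every nonnegative integer `x`,
`0 < log(x!) - [(x + 1/2) log(x+1) - (x+1) + log √(2π)] < 1/(12(x+1))`. -/
theorem stirling_factorial_bound (x : ℕ) :
    0 < Real.log (x.factorial)
          - (((x : ℝ) + 1/2) * Real.log ((x : ℝ) + 1) - ((x : ℝ) + 1)
              + Real.log (Real.sqrt (2 * π))) ∧
    Real.log (x.factorial)
          - (((x : ℝ) + 1/2) * Real.log ((x : ℝ) + 1) - ((x : ℝ) + 1)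
              + Real.log (Real.sqrt (2 * π))) < 1 / (12 * ((x : ℝ) + 1)) := by
  have hx1 : (0 : ℝ) < (x : ℝ) + 1 := by positivity
  have hπ : (0 : ℝ) < π := Real.pi_pos
  -- Key identity: E = log (stirlingSeq (x+1)) - log √π
  have hE : Real.log (x.factorial)
          - (((x : ℝ) + 1/2) * Real.log ((x : ℝ) + 1) - ((x : ℝ) + 1)
              + Real.log (Real.sqrt (2 * π)))
      = Real.log (stirlingSeq (x + 1)) - Real.log (Real.sqrt π) := by
    rw [Stirling.log_stirlingSeq_formula (x + 1)]
    have hfac : ((x + 1).factorial : ℝ) = ((x : ℝ) + 1) * (x.factorial : ℝ) := by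
      rw [Nat.factorial_succ]; push_cast; ring
    have hfacpos : (0 : ℝ) < (x.factorial : ℝ) := by exact_mod_cast x.factorial_pos
    rw [hfac, Real.log_mul hx1.ne' hfacpos.ne']
    rw [Real.log_sqrt (by positivity), Real.log_sqrt hπ.le,
      Real.log_mul (by norm_num) hπ.ne']
    have hcast : ((x + 1 : ℕ) : ℝ) = (x : ℝ) + 1 := by push_cast; ring
    rw [hcast]
    rw [Real.log_mul (by norm_num) hx1.ne']
    rw [Real.log_div hx1.ne' (Real.exp_ne_zero 1), Real.log_exp]
    ring
  rw [hE]
  constructor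
  · have h1 := log_stirlingSeq_diff_pos x
    have h2 := log_stirlingSeq_ge (x + 1)
    have hc : ((x + 1 : ℕ) : ℝ) = (x : ℝ) + 1 := by push_cast; ring
    linarith [h2]
  · have h1 := stirling_aux_strictMono (Nat.lt_succ_self x)
    have h2 := (stirling_aux_strictMono.monotone).ge_of_tendsto stirling_aux_tendsto (x + 1)
    simp only at h1 h2
    linarith
end

section
/- Fix α, β > 0 and 0 < ρ < 1, and for a path with h_n heads and t_n tails write n' = α+β+n, h_n' = α+h_n, t_n' = β+t_n. If Skeptic plays the beta-binomial Bayesian strategy, then log K_n = n'·D(h_n'/n' ‖ ρ) - (1/2)·log(h_n' t_n'/n') + c_0(α,β) + R_n, where c_0(α,β) = -log B(α,β) + α log ρ + β log(1-ρ) + log√(2π) and the remainder satisfies |R_n| ≤ 3/(12·min(h_n', t_n')). -/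
open Finset

/-- Rising factorial `(a)_m = a(a+1)⋯(a+m-1)`. -/
noncomputable def risingFactorial (a : ℝ) (m : ℕ) : ℝ := ∏ j ∈ range m, (a + j)

/-- Euler beta function. -/
noncomputable def Beta (a b : ℝ) : ℝ := Real.Gamma a * Real.Gamma b / Real.Gamma (a + b)

/-- Kullback divergence between Bernoulli parameters `p` and `q`. -/
noncomputable def KL (p q : ℝ) : ℝ :=
  p * Real.log (p / q) + (1 - p) * Real.log ((1 - p) / (1 - q))

noncomputable def sg (y : ℝ) : ℝ := (y + 1/2) * (Real.log (y+1) - Real.log y) - 1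

noncomputable def sRem (x : ℝ) : ℝ :=
  Real.log (Real.Gamma x) - ((x - 1/2) * Real.log x - x + Real.log (Real.sqrt (2*Real.pi)))

lemma sg_hasSum {y : ℝ} (hy : 0 < y) :
    HasSum (fun k : ℕ => (1 / (2 * (k+1 : ℕ) + 1 : ℝ)) * (1 / (2*y+1)) ^ (2*(k+1))) (sg y) := by
  have h2y : (0:ℝ) < 2*y+1 := by linarith
  have H := (Real.hasSum_log_one_add_inv hy).mul_left (y + 1/2)
  have hlog : Real.log (1 + y⁻¹) = Real.log (y+1) - Real.log y := by
    rw [← Real.log_div (by positivity) (by positivity)]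
    congr 1
    field_simp
  rw [hlog] at H
  have H2 : HasSum (fun k : ℕ => (1 / (2 * (k:ℕ) + 1 : ℝ)) * (1 / (2*y+1)) ^ (2*k))
      ((y + 1/2) * (Real.log (y+1) - Real.log y)) := by
    refine H.congr_fun fun k => ?_
    have : (y + 1/2) * ((2:ℝ) * (1 / (2 * k + 1)) * (1 / (2 * y + 1)) ^ (2 * k + 1))
        = ((2*y+1) * (1/(2*y+1))) * ((1 / (2 * (k:ℕ) + 1 : ℝ)) * (1 / (2*y+1)) ^ (2*k)) := by
      ring
    rw [this, mul_one_div_cancel h2y.ne', one_mul]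
  have := (hasSum_nat_add_iff' (f := fun k : ℕ => (1 / (2 * (k:ℕ) + 1 : ℝ)) * (1 / (2*y+1)) ^ (2*k)) 1).mpr H2
  simp only [range_one, sum_singleton] at this
  convert this using 1
  · rfl
  simp [sg]

lemma sg_nonneg {y : ℝ} (hy : 0 < y) : 0 ≤ sg y :=
  (sg_hasSum hy).nonneg fun k => by positivity

lemma sg_le {y : ℝ} (hy : 0 < y) : sg y ≤ 1/(12*y) - 1/(12*(y+1)) := by
  have h2y : (0:ℝ) < 2*y+1 := by linarith
  set u : ℝ := 1/(2*y+1) with hu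
  have hu0 : 0 < u := by positivity
  have hu1 : u < 1 := by
    rw [hu, div_lt_one h2y]; linarith
  have husq : u^2 < 1 := by nlinarith
  have hgeo : HasSum (fun k : ℕ => (u^2/3) * (u^2)^k) ((u^2/3) * (1 - u^2)⁻¹) :=
    (hasSum_geometric_of_lt_one (by positivity) husq).mul_left _
  have hle : sg y ≤ (u^2/3) * (1 - u^2)⁻¹ := by
    refine hasSum_le (fun k => ?_) (sg_hasSum hy) hgeo
    have h1 : (1 / (2 * ((k:ℕ)+1 : ℕ) + 1 : ℝ)) ≤ 1/3 := by
      rw [div_le_div_iff₀ (by positivity) (by norm_num)]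
      push_cast; linarith [Nat.cast_nonneg (α := ℝ) k]
    calc (1 / (2 * ((k:ℕ)+1 : ℕ) + 1 : ℝ)) * (1/(2*y+1)) ^ (2*(k+1))
        ≤ (1/3) * (1/(2*y+1)) ^ (2*(k+1)) := by
          apply mul_le_mul_of_nonneg_right h1 (by positivity)
      _ = (u^2/3) * (u^2)^k := by rw [hu]; ring
  refine hle.trans (le_of_eq ?_)
  have h1u : (1:ℝ) - u^2 = (4*y*(y+1))/(2*y+1)^2 := by
    rw [hu]; field_simp; ring
  rw [h1u, hu]
  field_simp
  ring

lemma sRem_step {y : ℝ} (hy : 0 < y) : sRem y = sg y + sRem (y+1) := by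
  have hG : Real.Gamma (y+1) = y * Real.Gamma y := Real.Gamma_add_one hy.ne'
  have hGpos : 0 < Real.Gamma y := Real.Gamma_pos_of_pos hy
  simp only [sRem, sg, hG, Real.log_mul hy.ne' hGpos.ne']
  ring

lemma logGamma_add_nat {x : ℝ} (hx : 0 < x) (N : ℕ) :
    Real.log (Real.Gamma (x + N)) = Real.log (Real.Gamma x) + ∑ k ∈ range N, Real.log (x + k) := by
  induction N with
  | zero => simp
  | succ N ih =>
    have hxN : (0:ℝ) < x + N := by positivity
    have h1 : x + (N+1 : ℕ) = (x + N) + 1 := by push_cast; ring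
    rw [h1, Real.Gamma_add_one hxN.ne',
      Real.log_mul hxN.ne' (Real.Gamma_pos_of_pos hxN).ne', ih, sum_range_succ]
    push_cast; ring

lemma log_GammaSeq {x : ℝ} (hx : 0 < x) {N : ℕ} (hN : 1 ≤ N) :
    Real.log (Real.GammaSeq x N)
      = x * Real.log N + Real.log (Nat.factorial N) - ∑ k ∈ range (N+1), Real.log (x + k) := by
  have hNpos : (0:ℝ) < N := by exact_mod_cast hN
  have hprod : ∀ k ∈ range (N+1), x + (k:ℝ) ≠ 0 := fun k _ => by positivity
  have hP : (0:ℝ) < ∏ j ∈ range (N+1), (x + j) := prod_pos fun k _ => by positivity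
  rw [Real.GammaSeq, Real.log_div (by positivity) hP.ne', Real.log_mul (by positivity)
    (by positivity), Real.log_rpow hNpos, Real.log_prod hprod]

lemma log_factorial {N : ℕ} (hN : 1 ≤ N) :
    Real.log (Nat.factorial N) = Real.log (Stirling.stirlingSeq N) + 1/2 * Real.log (2*N)
      + N * (Real.log N - 1) := by
  have hNpos : (0:ℝ) < N := by exact_mod_cast hN
  rw [Stirling.log_stirlingSeq_formula, Real.log_div hNpos.ne' (Real.exp_ne_zero 1),
    Real.log_exp]
  ring

lemma sRem_eq {x : ℝ} (hx : 0 < x) {N : ℕ} (hN : 1 ≤ N) :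
    sRem (x + N) = (Real.log (Real.Gamma x) - Real.log (Real.GammaSeq x N))
      + (Real.log (Stirling.stirlingSeq N) - Real.log (Real.sqrt Real.pi))
      + (x - (x + N + 1/2) * Real.log (1 + x/N)) := by
  have hNpos : (0:ℝ) < N := by exact_mod_cast hN
  have hsum : ∑ k ∈ range N, Real.log (x+k)
      = x * Real.log N + Real.log (Nat.factorial N) - Real.log (Real.GammaSeq x N)
        - Real.log (x+N) := by
    have h2 := log_GammaSeq hx hN
    rw [sum_range_succ] at h2
    push_cast at h2 ⊢
    linarith
  have hl1 : Real.log (1 + x/N) = Real.log (x+N) - Real.log N := by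
    rw [← Real.log_div (by positivity) hNpos.ne']
    congr 1
    field_simp
    ring
  have h2pi : Real.log (Real.sqrt (2*Real.pi)) = (Real.log 2 + Real.log Real.pi)/2 := by
    rw [Real.log_sqrt (by positivity), Real.log_mul two_ne_zero Real.pi_ne_zero]
  have hpi : Real.log (Real.sqrt Real.pi) = Real.log Real.pi / 2 :=
    Real.log_sqrt Real.pi_pos.le
  rw [sRem, logGamma_add_nat hx N, hsum, log_factorial hN, hl1, h2pi, hpi,
    Real.log_mul two_ne_zero hNpos.ne']
  ring

lemma sRem_tendsto {x : ℝ} (hx : 0 < x) :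
    Filter.Tendsto (fun N : ℕ => sRem (x + N)) Filter.atTop (nhds 0) := by
  have hA : Filter.Tendsto
      (fun N : ℕ => Real.log (Real.Gamma x) - Real.log (Real.GammaSeq x N))
      Filter.atTop (nhds 0) := by
    have h1 := ((Real.continuousAt_log (Real.Gamma_pos_of_pos hx).ne').tendsto).comp
      (Real.GammaSeq_tendsto_Gamma x)
    simpa using (tendsto_const_nhds (x := Real.log (Real.Gamma x))).sub h1
  have hB : Filter.Tendsto
      (fun N : ℕ => Real.log (Stirling.stirlingSeq N) - Real.log (Real.sqrt Real.pi))
      Filter.atTop (nhds 0) := by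
    have h1 := ((Real.continuousAt_log (by positivity : Real.sqrt Real.pi ≠ 0)).tendsto).comp
      Stirling.tendsto_stirlingSeq_sqrt_pi
    simpa using h1.sub (tendsto_const_nhds (x := Real.log (Real.sqrt Real.pi)))
  have hC : Filter.Tendsto (fun N : ℕ => x - (x + N + 1/2) * Real.log (1 + x/N))
      Filter.atTop (nhds 0) := by
    have h1 : Filter.Tendsto (fun N : ℕ => (N:ℝ) * Real.log (1 + x/N)) Filter.atTop (nhds x) :=
      (Real.tendsto_mul_log_one_add_div_atTop x).comp tendsto_natCast_atTop_atTop
    have h2 : Filter.Tendsto (fun N : ℕ => Real.log (1 + x/N)) Filter.atTop (nhds 0) := by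
      have h3 : Filter.Tendsto (fun N : ℕ => 1 + x/N) Filter.atTop (nhds 1) := by
        simpa using tendsto_const_nhds.add
          (Filter.Tendsto.div_atTop (tendsto_const_nhds (x := x)) tendsto_natCast_atTop_atTop)
      simpa [Function.comp_def] using ((Real.continuousAt_log one_ne_zero).tendsto).comp h3
    have h4 := tendsto_const_nhds (x := x) |>.sub (h1.add (h2.const_mul (x + 1/2)))
    have h5 : x - (x + (x + 1/2) * 0) = 0 := by ring
    rw [h5] at h4
    refine h4.congr fun N => ?_
    ring
  have h := (hA.add hB).add hC
  rw [show (0:ℝ) + 0 + 0 = 0 by ring] at h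
  refine h.congr' ?_
  filter_upwards [Filter.eventually_ge_atTop 1] with N hN
  exact (sRem_eq hx hN).symm

lemma sRem_telescope {x : ℝ} (hx : 0 < x) (N : ℕ) :
    sRem x = (∑ k ∈ range N, sg (x+k)) + sRem (x+N) := by
  induction N with
  | zero => simp
  | succ N ih =>
    have hxN : (0:ℝ) < x + N := by positivity
    have h1 : x + ((N:ℕ)+1 : ℕ) = (x + N) + 1 := by push_cast; ring
    rw [h1, sum_range_succ]
    have := sRem_step hxN
    linarith [ih]

lemma sRem_bounds {x : ℝ} (hx : 0 < x) : 0 ≤ sRem x ∧ sRem x ≤ 1/(12*x) := by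
  have hpart : Filter.Tendsto (fun N : ℕ => ∑ k ∈ range N, sg (x+k))
      Filter.atTop (nhds (sRem x)) := by
    have h1 := tendsto_const_nhds (x := sRem x) |>.sub (sRem_tendsto hx)
    rw [sub_zero] at h1
    refine h1.congr fun N => ?_
    rw [sRem_telescope hx N]; ring
  constructor
  · exact ge_of_tendsto' hpart fun N =>
      sum_nonneg fun k _ => sg_nonneg (by positivity)
  · refine le_of_tendsto' hpart fun N => ?_
    have htel : ∑ k ∈ range N, (1/(12*(x+k)) - 1/(12*(x+(k+1)))) = 1/(12*x) - 1/(12*(x+N)) := by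
      have := Finset.sum_range_sub' (f := fun k : ℕ => 1/(12*(x+k))) N
      simpa using this
    have hle : ∑ k ∈ range N, sg (x+k) ≤ ∑ k ∈ range N, (1/(12*(x+k)) - 1/(12*(x+(k+1)))) := by
      refine sum_le_sum fun k _ => ?_
      have := sg_le (y := x + k) (by positivity)
      convert this using 3
      · rfl
      push_cast; ring
    have hN0 : (0:ℝ) ≤ 1/(12*(x+N)) := by positivity
    linarith [hle, htel.le, htel.ge]


lemma log_risingFactorial {a : ℝ} (ha : 0 < a) (m : ℕ) :
    Real.log (risingFactorial a m)
      = sRem (a+m) + (a+m-1/2)*Real.log (a+m) - (a+m)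
        + Real.log (Real.sqrt (2*Real.pi)) - Real.log (Real.Gamma a) := by
  rw [risingFactorial, Real.log_prod (fun k _ => by positivity : ∀ k ∈ range m, a + (k:ℝ) ≠ 0)]
  have h2 : sRem (a+(m:ℝ)) = Real.log (Real.Gamma (a+(m:ℝ)))
      - ((a+(m:ℝ)-1/2)*Real.log (a+(m:ℝ)) - (a+(m:ℝ)) + Real.log (Real.sqrt (2*Real.pi))) := rfl
  linarith [logGamma_add_nat ha m]


/-- Kullback-divergence expansion of the beta-binomial log capital: with
`h' = α + h`, `t' = β + t`, `n' = α + β + n` (`n = h + t`),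
`log K_n = n' D(h'/n' ‖ ρ) - (1/2) log(h' t'/n') + c₀(α,β) + R` where
`c₀(α,β) = -log B(α,β) + α log ρ + β log(1-ρ) + log √(2π)` and
`|R| ≤ 3/(12 min(h', t'))`. -/
theorem betaBinomial_log_capital_expansion (α β ρ : ℝ)
    (hα : 0 < α) (hβ : 0 < β) (hρ0 : 0 < ρ) (hρ1 : ρ < 1)
    (h t n : ℕ) (hn : n = h + t) :
    ∃ R : ℝ,
      Real.log (risingFactorial α h * risingFactorial β t
          / (risingFactorial (α + β) n * ρ ^ h * (1 - ρ) ^ t))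
        = (α + β + n) * KL ((α + h) / (α + β + n)) ρ
            - (1/2) * Real.log ((α + h) * (β + t) / (α + β + n))
            + (-Real.log (Beta α β) + α * Real.log ρ + β * Real.log (1 - ρ)
                + Real.log (Real.sqrt (2 * Real.pi)))
            + R
      ∧ |R| ≤ 3 / (12 * min (α + h) (β + t)) := by
  subst hn
  have h1ρ : (0:ℝ) < 1 - ρ := by linarith
  have hh : (0:ℝ) < α + h := by positivity
  have ht : (0:ℝ) < β + t := by positivity
  have hnn : (0:ℝ) < α + β + ((h+t : ℕ):ℝ) := by positivity
  have hrfpos : ∀ (a : ℝ), 0 < a → ∀ m : ℕ, 0 < risingFactorial a m := by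
    intro a ha m
    exact prod_pos fun k _ => by positivity
  have hA := hrfpos α hα h
  have hB := hrfpos β hβ t
  have hC := hrfpos (α+β) (by positivity) (h+t)
  have hρh : (0:ℝ) < ρ ^ h := by positivity
  have h1ρt : (0:ℝ) < (1-ρ) ^ t := by positivity
  refine ⟨sRem (α+(h:ℝ)) + sRem (β+(t:ℝ)) - sRem (α+β+((h:ℝ)+(t:ℝ))), ?_, ?_⟩
  · have hKL : (α+β+((h+t:ℕ):ℝ)) * KL ((α+(h:ℝ))/(α+β+((h+t:ℕ):ℝ))) ρ
        = (α+h)*(Real.log (α+(h:ℝ)) - Real.log (α+β+((h+t:ℕ):ℝ)) - Real.log ρ)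
          + (β+t)*(Real.log (β+(t:ℝ)) - Real.log (α+β+((h+t:ℕ):ℝ)) - Real.log (1-ρ)) := by
      have h1p : 1 - (α+(h:ℝ))/(α+β+((h+t:ℕ):ℝ)) = (β+(t:ℝ))/(α+β+((h+t:ℕ):ℝ)) := by
        field_simp
        push_cast
        ring
      rw [KL, h1p, Real.log_div (div_pos hh hnn).ne' hρ0.ne',
        Real.log_div (div_pos ht hnn).ne' h1ρ.ne',
        Real.log_div hh.ne' hnn.ne', Real.log_div ht.ne' hnn.ne']
      field_simp
    have hmid : Real.log ((α+(h:ℝ))*(β+(t:ℝ))/(α+β+((h+t:ℕ):ℝ)))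
        = Real.log (α+(h:ℝ)) + Real.log (β+(t:ℝ)) - Real.log (α+β+((h+t:ℕ):ℝ)) := by
      rw [Real.log_div (by positivity) hnn.ne', Real.log_mul hh.ne' ht.ne']
    have hBeta : Real.log (Beta α β)
        = Real.log (Real.Gamma α) + Real.log (Real.Gamma β) - Real.log (Real.Gamma (α+β)) := by
      rw [Beta, Real.log_div (by positivity : (Real.Gamma α * Real.Gamma β) ≠ 0)
        (Real.Gamma_pos_of_pos (by positivity)).ne',
        Real.log_mul (Real.Gamma_pos_of_pos hα).ne' (Real.Gamma_pos_of_pos hβ).ne']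
    rw [Real.log_div (by positivity) (by positivity),
      Real.log_mul hA.ne' hB.ne',
      Real.log_mul (by positivity) h1ρt.ne',
      Real.log_mul hC.ne' hρh.ne',
      Real.log_pow, Real.log_pow,
      log_risingFactorial hα h, log_risingFactorial hβ t,
      log_risingFactorial (by positivity : (0:ℝ) < α + β) (h+t),
      hKL, hmid, hBeta]
    push_cast
    ring
  · have b1 := sRem_bounds hh
    have b2 := sRem_bounds ht
    have b3 := sRem_bounds (show (0:ℝ) < α+β+((h:ℝ)+(t:ℝ)) by positivity)
    set m := min (α+(h:ℝ)) (β+(t:ℝ)) with hm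
    have hm0 : 0 < m := lt_min hh ht
    have hmh : m ≤ α+(h:ℝ) := min_le_left _ _
    have hmt : m ≤ β+(t:ℝ) := min_le_right _ _
    have hmn : m ≤ α+β+((h:ℝ)+(t:ℝ)) := by
      have := hmh
      have ht0 : (0:ℝ) ≤ (t:ℝ) := Nat.cast_nonneg t
      linarith
    have e1 : 1/(12*(α+(h:ℝ))) ≤ 1/(12*m) :=
      one_div_le_one_div_of_le (by positivity) (by linarith)
    have e2 : 1/(12*(β+(t:ℝ))) ≤ 1/(12*m) :=
      one_div_le_one_div_of_le (by positivity) (by linarith)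
    have e3 : 1/(12*(α+β+((h:ℝ)+(t:ℝ)))) ≤ 1/(12*m) :=
      one_div_le_one_div_of_le (by positivity) (by linarith)
    rw [abs_le]
    constructor
    · have : 3/(12*m) = 1/(12*m) + 1/(12*m) + 1/(12*m) := by ring
      rw [this]
      linarith [b1.1, b2.1, b3.2]
    · have : 3/(12*m) = 1/(12*m) + 1/(12*m) + 1/(12*m) := by ring
      rw [this]
      linarith [b1.2, b2.2, b3.1]
end

section
/- For the beta-binomial strategy with α, β > 0 in the biased-coin game with 0 < ρ < 1: if limsup_n K_n = ∞, then limsup_n √n·|x̄_n|/√(log n) ≥ √(ρ(1-ρ)), where x̄_n = (x_1+⋯+x_n)/n and K_n is the beta-binomial capital process. -/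
open Finset Filter

/-- Number of heads among Reality's first `n` moves (`ε i = true` means `x_{i+1} = 1-ρ`). -/
def headsCount (ε : ℕ → Bool) (n : ℕ) : ℕ := ((range n).filter (fun i => ε i = true)).card

/-- Reality's move at round `i+1` in the biased-coin game. -/
noncomputable def move (ρ : ℝ) (ε : ℕ → Bool) (i : ℕ) : ℝ := if ε i then 1 - ρ else -ρ

/-- Average `x̄_n` of Reality's first `n` moves. -/
noncomputable def avg (ρ : ℝ) (ε : ℕ → Bool) (n : ℕ) : ℝ :=
  (∑ i ∈ range n, move ρ ε i) / n

/-- Capital process of the beta-binomial Bayesian strategy: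
`K_n = (α)_{h_n}(β)_{t_n}/((α+β)_n ρ^{h_n}(1-ρ)^{t_n})`. -/
noncomputable def betaBinomialCapital (α β ρ : ℝ) (ε : ℕ → Bool) (n : ℕ) : ℝ :=
  risingFactorial α (headsCount ε n) * risingFactorial β (n - headsCount ε n)
    / (risingFactorial (α + β) n * ρ ^ headsCount ε n * (1 - ρ) ^ (n - headsCount ε n))

section AuxiliaryLemmas
open MeasureTheory Set intervalIntegral

/-- Second-order bound: if `f' x₀ = 0` and `f'' ≤ M` on the segment, then
`f x ≤ f x₀ + M/2 * (x-x₀)^2`. -/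
lemma second_order_bound {f f' f'' : ℝ → ℝ} {x₀ x M : ℝ}
    (hd1 : ∀ y ∈ uIcc x₀ x, HasDerivAt f (f' y) y)
    (hd2 : ∀ y ∈ uIcc x₀ x, HasDerivAt f' (f'' y) y)
    (hc : ContinuousOn f'' (uIcc x₀ x))
    (h0 : f' x₀ = 0)
    (hM : ∀ y ∈ uIcc x₀ x, f'' y ≤ M) :
    f x ≤ f x₀ + M / 2 * (x - x₀) ^ 2 := by
  have hf'c : ContinuousOn f' (uIcc x₀ x) := fun y hy => ((hd2 y hy).continuousAt).continuousWithinAt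
  rcases le_total x₀ x with hle | hle
  · have huIcc : uIcc x₀ x = Icc x₀ x := uIcc_of_le hle
    rw [huIcc] at hd1 hd2 hc hf'c hM
    -- bound on f'
    have key : ∀ y ∈ Icc x₀ x, f' y ≤ M * (y - x₀) := by
      intro y hy
      have hsub : Icc x₀ y ⊆ Icc x₀ x := Icc_subset_Icc le_rfl hy.2
      have hftc : ∫ t in x₀..y, f'' t = f' y - f' x₀ := by
        apply intervalIntegral.integral_eq_sub_of_hasDerivAt
        · intro t ht
          exact hd2 t (hsub (by rwa [uIcc_of_le hy.1] at ht))
        · exact ((hc.mono hsub).mono (by rw [uIcc_of_le hy.1])).intervalIntegrable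
      have hmono : ∫ t in x₀..y, f'' t ≤ ∫ t in x₀..y, M := by
        apply intervalIntegral.integral_mono_on hy.1
        · exact ((hc.mono hsub).mono (by rw [uIcc_of_le hy.1])).intervalIntegrable
        · exact intervalIntegrable_const
        · intro t ht; exact hM t (hsub ht)
      rw [hftc, h0, sub_zero, intervalIntegral.integral_const, smul_eq_mul] at hmono
      linarith [hmono]
    have hftc : ∫ y in x₀..x, f' y = f x - f x₀ := by
      apply intervalIntegral.integral_eq_sub_of_hasDerivAt
      · intro t ht; exact hd1 t (by rwa [uIcc_of_le hle] at ht)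
      · exact (hf'c.mono (by rw [uIcc_of_le hle])).intervalIntegrable
    have hmono : ∫ y in x₀..x, f' y ≤ ∫ y in x₀..x, M * (y - x₀) := by
      apply intervalIntegral.integral_mono_on hle
      · exact (hf'c.mono (by rw [uIcc_of_le hle])).intervalIntegrable
      · exact (Continuous.continuousOn (by continuity)).intervalIntegrable
      · exact key
    have hcomp : ∫ y in x₀..x, M * (y - x₀) = M / 2 * (x - x₀) ^ 2 := by
      rw [intervalIntegral.integral_const_mul]
      have := intervalIntegral.integral_comp_sub_right (fun y => y) x₀ (a := x₀) (b := x)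
      rw [this, sub_self, integral_id]
      ring
    rw [hftc, hcomp] at hmono
    linarith
  · have huIcc : uIcc x₀ x = Icc x x₀ := uIcc_of_ge hle
    rw [huIcc] at hd1 hd2 hc hf'c hM
    have key : ∀ y ∈ Icc x x₀, M * (y - x₀) ≤ f' y := by
      intro y hy
      have hsub : Icc y x₀ ⊆ Icc x x₀ := Icc_subset_Icc hy.1 le_rfl
      have hftc : ∫ t in y..x₀, f'' t = f' x₀ - f' y := by
        apply intervalIntegral.integral_eq_sub_of_hasDerivAt
        · intro t ht; exact hd2 t (hsub (by rwa [uIcc_of_le hy.2] at ht))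
        · exact ((hc.mono hsub).mono (by rw [uIcc_of_le hy.2])).intervalIntegrable
      have hmono : ∫ t in y..x₀, f'' t ≤ ∫ t in y..x₀, M := by
        apply intervalIntegral.integral_mono_on hy.2
        · exact ((hc.mono hsub).mono (by rw [uIcc_of_le hy.2])).intervalIntegrable
        · exact intervalIntegrable_const
        · intro t ht; exact hM t (hsub ht)
      rw [hftc, h0, zero_sub, intervalIntegral.integral_const, smul_eq_mul] at hmono
      nlinarith [hmono]
    have hftc : ∫ y in x..x₀, f' y = f x₀ - f x := by
      apply intervalIntegral.integral_eq_sub_of_hasDerivAt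
      · intro t ht; exact hd1 t (by rwa [uIcc_of_le hle] at ht)
      · exact (hf'c.mono (by rw [uIcc_of_le hle])).intervalIntegrable
    have hmono : ∫ y in x..x₀, M * (y - x₀) ≤ ∫ y in x..x₀, f' y := by
      apply intervalIntegral.integral_mono_on hle
      · exact (Continuous.continuousOn (by continuity)).intervalIntegrable
      · exact (hf'c.mono (by rw [uIcc_of_le hle])).intervalIntegrable
      · exact key
    have hcomp : ∫ y in x..x₀, M * (y - x₀) = - (M / 2 * (x - x₀) ^ 2) := by
      rw [intervalIntegral.integral_const_mul]
      have := intervalIntegral.integral_comp_sub_right (fun y => y) x₀ (a := x) (b := x₀)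
      rw [this, sub_self, integral_id]
      ring
    rw [hftc, hcomp] at hmono
    linarith


lemma rf_zero (a : ℝ) : risingFactorial a 0 = 1 := by simp [risingFactorial]

lemma rf_succ (a : ℝ) (m : ℕ) : risingFactorial a (m+1) = risingFactorial a m * (a + m) := by
  simp [risingFactorial, Finset.prod_range_succ]

lemma rf_shift (a : ℝ) (m : ℕ) : risingFactorial a (m+1) = a * risingFactorial (a+1) m := by
  simp only [risingFactorial, Finset.prod_range_succ']
  rw [mul_comm]
  congr 1
  · norm_num
  · apply Finset.prod_congr rfl; intro j _; push_cast; ring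

lemma rf_pos {a : ℝ} (ha : 0 < a) (m : ℕ) : 0 < risingFactorial a m := by
  apply Finset.prod_pos; intro j _; positivity

/-- The (shifted) beta integrand's integral. -/
noncomputable def betaInt (u v : ℝ) : ℝ := ∫ p in (0:ℝ)..1, p ^ (u-1) * (1-p) ^ (v-1)

lemma cont_rpow_mul {e1 e2 : ℝ} (he1 : 0 ≤ e1) (he2 : 0 ≤ e2) :
    Continuous (fun p : ℝ => p ^ e1 * (1-p) ^ e2) := by
  apply Continuous.mul
  · exact continuous_iff_continuousAt.2 (fun x => Real.continuousAt_rpow_const x e1 (Or.inr he1))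
  · exact (continuous_iff_continuousAt.2
      (fun x => Real.continuousAt_rpow_const x e2 (Or.inr he2))).comp (by continuity)

lemma betaInt_pos {u v : ℝ} (hu : 1 ≤ u) (hv : 1 ≤ v) : 0 < betaInt u v := by
  apply intervalIntegral.intervalIntegral_pos_of_pos_on
  · exact ((cont_rpow_mul (by linarith) (by linarith)).continuousOn).intervalIntegrable
  · intro x hx
    have h1 : (0:ℝ) < x := hx.1
    have h2 : (0:ℝ) < 1 - x := by linarith [hx.2]
    positivity
  · norm_num

lemma betaInt_ibp {u v : ℝ} (hu : 1 ≤ u) (hv : 1 ≤ v) :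
    u * betaInt u (v+1) = v * betaInt (u+1) v := by
  have hu0 : (0:ℝ) < u := by linarith
  have hv0 : (0:ℝ) < v := by linarith
  have c1 : Continuous (fun p : ℝ => p ^ (u-1) * (1-p) ^ v) :=
    cont_rpow_mul (by linarith) (by linarith)
  have c2 : Continuous (fun p : ℝ => p ^ u * (1-p) ^ (v-1)) :=
    cont_rpow_mul (by linarith) (by linarith)
  have hderiv : ∀ p ∈ uIcc (0:ℝ) 1,
      HasDerivAt (fun p : ℝ => p ^ u * (1-p) ^ v)
        (u * (p ^ (u-1) * (1-p) ^ v) - v * (p ^ u * (1-p) ^ (v-1))) p := by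
    intro p _
    have h1 : HasDerivAt (fun p : ℝ => p ^ u) (u * p ^ (u-1)) p :=
      Real.hasDerivAt_rpow_const (Or.inr hu)
    have h2 : HasDerivAt (fun p : ℝ => (1-p) ^ v) (-(v * (1-p) ^ (v-1))) p := by
      have h3 : HasDerivAt (fun q : ℝ => q ^ v) (v * (1-p) ^ (v-1)) (1-p) :=
        Real.hasDerivAt_rpow_const (Or.inr hv)
      have h4 : HasDerivAt (fun p : ℝ => 1 - p) (-1) p := by
        simpa using (hasDerivAt_id p).const_sub 1
      exact (h3.comp p h4).congr_deriv (by ring)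
    have := h1.mul h2
    exact this.congr_deriv (by ring)
  have hcont : Continuous
      (fun p : ℝ => u * (p ^ (u-1) * (1-p) ^ v) - v * (p ^ u * (1-p) ^ (v-1))) :=
    (continuous_const.mul c1).sub (continuous_const.mul c2)
  have hftc : ∫ p in (0:ℝ)..1, (u * (p ^ (u-1) * (1-p) ^ v) - v * (p ^ u * (1-p) ^ (v-1)))
      = (1:ℝ) ^ u * (1-(1:ℝ)) ^ v - ((0:ℝ) ^ u * (1-(0:ℝ)) ^ v) :=
    intervalIntegral.integral_eq_sub_of_hasDerivAt hderiv hcont.continuousOn.intervalIntegrable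
  have hz : (1:ℝ) ^ u * (1-(1:ℝ)) ^ v - ((0:ℝ) ^ u * (1-(0:ℝ)) ^ v) = 0 := by
    norm_num [Real.zero_rpow (ne_of_gt hv0), Real.zero_rpow (ne_of_gt hu0)]
  have hsplit : ∫ p in (0:ℝ)..1, (u * (p ^ (u-1) * (1-p) ^ v) - v * (p ^ u * (1-p) ^ (v-1)))
      = u * betaInt u (v+1) - v * betaInt (u+1) v := by
    rw [intervalIntegral.integral_sub, intervalIntegral.integral_const_mul,
      intervalIntegral.integral_const_mul]
    · unfold betaInt
      norm_num
    · exact ((continuous_const.mul c1).continuousOn).intervalIntegrable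
    · exact ((continuous_const.mul c2).continuousOn).intervalIntegrable
  rw [hsplit, hz] at hftc
  linarith

lemma betaInt_split {u v : ℝ} (hu : 1 ≤ u) (hv : 1 ≤ v) :
    betaInt u v = betaInt (u+1) v + betaInt u (v+1) := by
  unfold betaInt
  rw [← intervalIntegral.integral_add
    ((cont_rpow_mul (e1 := u+1-1) (e2 := v-1) (by linarith) (by linarith)).continuousOn.intervalIntegrable)
    ((cont_rpow_mul (e1 := u-1) (e2 := v+1-1) (by linarith) (by linarith)).continuousOn.intervalIntegrable)]
  apply intervalIntegral.integral_congr
  intro p hp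
  rw [uIcc_of_le (by norm_num : (0:ℝ) ≤ 1)] at hp
  have hp0 : 0 ≤ p := hp.1
  have hp1 : 0 ≤ 1 - p := by linarith [hp.2]
  have e1 : ∀ {w : ℝ}, 1 ≤ w → ∀ {q : ℝ}, 0 ≤ q → q ^ (w+1-1) = q ^ (w-1) * q := by
    intro w hw q hq
    rcases eq_or_lt_of_le hq with h | h
    · rw [← h]
      rw [Real.zero_rpow (by linarith : w + 1 - 1 ≠ 0), mul_zero]
    · rw [show w+1-1 = (w-1)+1 by ring, Real.rpow_add_one (ne_of_gt h)]
  simp only []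
  rw [e1 hu hp0, e1 hv hp1]
  ring

lemma betaInt_rec_left {u v : ℝ} (hu : 1 ≤ u) (hv : 1 ≤ v) :
    betaInt (u+1) v = u / (u+v) * betaInt u v := by
  have h1 := betaInt_ibp hu hv
  have h2 := betaInt_split hu hv
  have huv : u + v ≠ 0 := by positivity
  field_simp
  linear_combination -u * h2 - h1

lemma betaInt_rec_right {u v : ℝ} (hu : 1 ≤ u) (hv : 1 ≤ v) :
    betaInt u (v+1) = v / (u+v) * betaInt u v := by
  have h1 := betaInt_ibp hu hv
  have h2 := betaInt_split hu hv
  have huv : u + v ≠ 0 := by positivity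
  field_simp
  linear_combination -v * h2 + h1

section Q
variable {α β : ℝ}

lemma betaInt_rf (hα : 0 < α) (hβ : 0 < β) (h t : ℕ) :
    betaInt (α+1+h) (β+1+t) * risingFactorial (α+β+2) (h+t) =
    betaInt (α+1) (β+1) * risingFactorial (α+1) h * risingFactorial (β+1) t := by
  have hcast0 : ∀ m : ℕ, (0:ℝ) ≤ m := fun m => Nat.cast_nonneg m
  induction t with
  | zero =>
    induction h with
    | zero => simp [rf_zero]
    | succ h ih =>
      simp only [Nat.cast_zero, add_zero, Nat.add_zero] at ih ⊢
      have hu : (1:ℝ) ≤ α+1+h := by linarith [hcast0 h]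
      have hv : (1:ℝ) ≤ β+1 := by linarith
      have hne : (α+1+(h:ℝ)) + (β+1) ≠ 0 := by positivity
      have hrec' : betaInt ((α+1+h)+1) (β+1) * ((α+1+h)+(β+1))
          = (α+1+h) * betaInt (α+1+h) (β+1) := by
        rw [betaInt_rec_left hu hv]; field_simp
      have hcast : (α+1+((h:ℕ)+1:ℕ) : ℝ) = (α+1+h)+1 := by push_cast; ring
      rw [hcast, rf_succ, rf_succ]
      push_cast
      linear_combination risingFactorial (α+β+2) h * hrec' + (α+1+(h:ℝ)) * ih
  | succ t ih =>
    have hu : (1:ℝ) ≤ α+1+h := by linarith [hcast0 h]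
    have hv : (1:ℝ) ≤ β+1+t := by linarith [hcast0 t]
    have hne : (α+1+(h:ℝ)) + (β+1+t) ≠ 0 := by positivity
    have hrec' : betaInt (α+1+h) ((β+1+t)+1) * ((α+1+h)+(β+1+t))
        = (β+1+t) * betaInt (α+1+h) (β+1+t) := by
      rw [betaInt_rec_right hu hv]; field_simp
    have hcast : (β+1+((t:ℕ)+1:ℕ) : ℝ) = (β+1+t)+1 := by push_cast; ring
    have hn : ((h:ℕ)+(t+1) : ℕ) = (h+t)+1 := by omega
    rw [hcast, hn, rf_succ, rf_succ]
    push_cast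
    linear_combination risingFactorial (α+β+2) (h+t) * hrec' + (β+1+(t:ℝ)) * ih

lemma rf_betaInt (hα : 0 < α) (hβ : 0 < β) {h t : ℕ} (hh : 1 ≤ h) (ht : 1 ≤ t) :
    risingFactorial α h * risingFactorial β t * betaInt (α+1) (β+1) * ((α+β)*(α+β+1)) =
    α * β * risingFactorial (α+β) (h+t) * betaInt (α+h) (β+t) := by
  obtain ⟨h', rfl⟩ : ∃ h', h = h' + 1 := ⟨h-1, by omega⟩
  obtain ⟨t', rfl⟩ : ∃ t', t = t' + 1 := ⟨t-1, by omega⟩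
  have key := betaInt_rf hα hβ h' t'
  rw [rf_shift α, rf_shift β]
  have hrfn : risingFactorial (α+β) (h'+1+(t'+1)) =
      (α+β) * ((α+β+1) * risingFactorial (α+β+2) (h'+t')) := by
    have e1 : h'+1+(t'+1) = (h'+t'+1)+1 := by omega
    rw [e1, rf_shift (α+β), rf_shift (α+β+1), show α+β+1+1 = α+β+2 from by ring]
  rw [hrfn]
  have e2 : (α + (h'+1:ℕ) : ℝ) = α+1+h' := by push_cast; ring
  have e3 : (β + (t'+1:ℕ) : ℝ) = β+1+t' := by push_cast; ring
  rw [e2, e3]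
  linear_combination (-(α * β * (α+β) * (α+β+1))) * key
end Q

lemma betaInt_le_laplace {a b : ℝ} (ha : 1 < a) (hb : 1 < b) :
    betaInt a b ≤ ((a-1)/(a+b-2)) ^ (a-1) * ((b-1)/(a+b-2)) ^ (b-1)
      * Real.sqrt (2 * Real.pi / (a+b-2)) := by
  set A := a - 1 with hA
  set B := b - 1 with hB
  have hA0 : 0 < A := by simp [hA]; linarith
  have hB0 : 0 < B := by simp [hB]; linarith
  set s := a + b - 2 with hs
  have hs0 : 0 < s := by simp [hs]; linarith
  have hsAB : s = A + B := by simp [hs, hA, hB]; ring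
  set ps := A / s with hps
  have hps0 : 0 < ps := div_pos hA0 hs0
  have hps1 : ps < 1 := by
    rw [hps, div_lt_one hs0]; rw [hsAB]; linarith
  have hqs : 1 - ps = B / s := by
    rw [hps]; field_simp; rw [hsAB]; ring
  -- pointwise bound on (0,1)
  have hpoint : ∀ p ∈ Icc (0:ℝ) 1,
      p ^ A * (1-p) ^ B ≤ ps ^ A * (1-ps) ^ B * Real.exp (-(s/2) * (p - ps)^2) := by
    intro p hp
    have hRpos : ∀ z : ℝ, 0 ≤ ps ^ A * (1-ps) ^ B * Real.exp z := fun z =>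
      mul_nonneg (mul_nonneg (Real.rpow_nonneg hps0.le A)
        (Real.rpow_nonneg (by linarith) B)) (Real.exp_nonneg _)
    rcases eq_or_lt_of_le hp.1 with h0 | h0
    · rw [← h0, Real.zero_rpow (ne_of_gt hA0), zero_mul]
      exact hRpos _
    rcases eq_or_lt_of_le hp.2 with h1 | h1
    · rw [h1, sub_self, Real.zero_rpow (ne_of_gt hB0), mul_zero]
      exact hRpos _
    -- interior case: 0 < p < 1
    have hq0 : 0 < 1 - p := by linarith
    set f : ℝ → ℝ := fun y => A * Real.log y + B * Real.log (1-y) with hf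
    set f' : ℝ → ℝ := fun y => A / y - B / (1-y) with hf'
    set f'' : ℝ → ℝ := fun y => -(A / y^2) - B / (1-y)^2 with hf''
    have hmem : ∀ y ∈ uIcc ps p, 0 < y ∧ y < 1 := by
      intro y hy
      rcases le_total ps p with hc | hc
      · rw [uIcc_of_le hc] at hy; exact ⟨lt_of_lt_of_le hps0 hy.1, lt_of_le_of_lt hy.2 h1⟩
      · rw [uIcc_of_ge hc] at hy; exact ⟨lt_of_lt_of_le h0 hy.1, lt_of_le_of_lt hy.2 hps1⟩
    have hd1 : ∀ y ∈ uIcc ps p, HasDerivAt f (f' y) y := by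
      intro y hy
      obtain ⟨hy0, hy1⟩ := hmem y hy
      have d1 : HasDerivAt (fun y : ℝ => Real.log y) (1/y) y := by
        simpa [one_div] using Real.hasDerivAt_log (ne_of_gt hy0)
      have d2 : HasDerivAt (fun y : ℝ => Real.log (1-y)) (-(1/(1-y))) y := by
        have d3 : HasDerivAt Real.log (1/(1-y)) (1-y) := by
          simpa [one_div] using Real.hasDerivAt_log (by linarith : (1:ℝ)-y ≠ 0)
        have d4 : HasDerivAt (fun y : ℝ => 1 - y) (-1) y := by
          simpa using (hasDerivAt_id y).const_sub 1
        exact (d3.comp y d4).congr_deriv (by ring)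
      have := (d1.const_mul A).add (d2.const_mul B)
      exact this.congr_deriv (by simp only [hf']; ring)
    have hd2 : ∀ y ∈ uIcc ps p, HasDerivAt f' (f'' y) y := by
      intro y hy
      obtain ⟨hy0, hy1⟩ := hmem y hy
      have d1 : HasDerivAt (fun y : ℝ => A / y) (-(A / y^2)) y := by
        simpa [div_eq_mul_inv] using ((hasDerivAt_inv (ne_of_gt hy0)).const_mul A)
      have d2 : HasDerivAt (fun y : ℝ => B / (1-y)) (B / (1-y)^2) y := by
        have d3 : HasDerivAt (fun q : ℝ => B / q) (-(B / (1-y)^2)) (1-y) := by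
          simpa [div_eq_mul_inv] using ((hasDerivAt_inv (by linarith : (1:ℝ)-y ≠ 0)).const_mul B)
        have d4 : HasDerivAt (fun y : ℝ => 1 - y) (-1) y := by
          simpa using (hasDerivAt_id y).const_sub 1
        have := d3.comp y d4
        exact this.congr_deriv (by ring)
      exact d1.sub d2
    have hcf : ContinuousOn f'' (uIcc ps p) := by
      intro y hy
      obtain ⟨hy0, hy1⟩ := hmem y hy
      have c1 : ContinuousAt (fun y : ℝ => -(A / y^2)) y :=
        (ContinuousAt.div continuousAt_const ((continuous_pow 2).continuousAt)
          (by positivity : (0:ℝ) < y^2).ne').neg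
      have c2 : ContinuousAt (fun y : ℝ => B / (1-y)^2) y :=
        ContinuousAt.div continuousAt_const
          (((continuous_const.sub continuous_id).pow 2).continuousAt)
          (by nlinarith : (0:ℝ) < (1-y)^2).ne'
      exact (c1.sub c2).continuousWithinAt
    have h0' : f' ps = 0 := by
      rw [hf']
      simp only
      rw [hqs, hps]
      field_simp
      ring
    have hMb : ∀ y ∈ uIcc ps p, f'' y ≤ -s := by
      intro y hy
      obtain ⟨hy0, hy1⟩ := hmem y hy
      have e1 : A ≤ A / y^2 := by
        rw [le_div_iff₀ (by positivity)]
        nlinarith [mul_nonneg hA0.le (mul_nonneg (sub_nonneg.2 hy1.le) (by linarith : (0:ℝ) ≤ 1+y))]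
      have e2 : B ≤ B / (1-y)^2 := by
        rw [le_div_iff₀ (by nlinarith : (0:ℝ) < (1-y)^2)]
        nlinarith [mul_nonneg hB0.le (mul_nonneg hy0.le (by linarith : (0:ℝ) ≤ 2-y))]
      rw [hf'', hsAB]
      simp only
      linarith
    have key := second_order_bound hd1 hd2 hcf h0' hMb
    have ef : ∀ y : ℝ, 0 < y → y < 1 → Real.exp (f y) = y ^ A * (1-y) ^ B := by
      intro y hy0 hy1
      rw [hf]
      simp only
      rw [Real.exp_add, Real.rpow_def_of_pos hy0, Real.rpow_def_of_pos (by linarith : (0:ℝ) < 1-y),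
        mul_comm A, mul_comm B]
    have expkey := Real.exp_le_exp.2 key
    rw [ef p h0 h1] at expkey
    rw [Real.exp_add, ef ps hps0 hps1] at expkey
    calc p ^ A * (1-p) ^ B ≤ ps ^ A * (1-ps) ^ B * Real.exp (-s / 2 * (p - ps) ^ 2) := expkey
      _ = ps ^ A * (1-ps) ^ B * Real.exp (-(s/2) * (p - ps)^2) := by ring_nf
  -- integrate
  have hGint : Integrable (fun p : ℝ => Real.exp (-(s/2) * (p - ps)^2)) := by
    have := (integrable_exp_neg_mul_sq (by positivity : (0:ℝ) < s/2)).comp_sub_right ps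
    simpa using this
  have hint : betaInt a b ≤ ∫ p in (0:ℝ)..1,
      ps ^ A * (1-ps) ^ B * Real.exp (-(s/2) * (p - ps)^2) := by
    unfold betaInt
    apply intervalIntegral.integral_mono_on (by norm_num)
    · exact ((cont_rpow_mul (le_of_lt hA0) (le_of_lt hB0)).continuousOn).intervalIntegrable
    · exact hGint.intervalIntegrable.const_mul _
    · intro p hp; exact hpoint p hp
  have hgauss : ∫ p in (0:ℝ)..1, Real.exp (-(s/2) * (p - ps)^2) ≤ Real.sqrt (2 * Real.pi / s) := by
    rw [intervalIntegral.integral_of_le (by norm_num : (0:ℝ) ≤ 1)]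
    calc ∫ p in Set.Ioc (0:ℝ) 1, Real.exp (-(s/2) * (p - ps)^2)
        ≤ ∫ p : ℝ, Real.exp (-(s/2) * (p - ps)^2) := by
          apply MeasureTheory.setIntegral_le_integral hGint
          filter_upwards with x
          positivity
      _ = ∫ p : ℝ, Real.exp (-(s/2) * p^2) := by
          exact MeasureTheory.integral_sub_right_eq_self (fun p => Real.exp (-(s/2) * p^2)) ps
      _ = Real.sqrt (Real.pi / (s/2)) := integral_gaussian (s/2)
      _ = Real.sqrt (2 * Real.pi / s) := by rw [div_div_eq_mul_div]; ring_nf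
  have hfinal : ∫ p in (0:ℝ)..1, ps ^ A * (1-ps) ^ B * Real.exp (-(s/2) * (p - ps)^2)
      = ps ^ A * (1-ps) ^ B * ∫ p in (0:ℝ)..1, Real.exp (-(s/2) * (p - ps)^2) := by
    rw [intervalIntegral.integral_const_mul]
  rw [hfinal] at hint
  have hpos : (0:ℝ) ≤ ps ^ A * (1-ps) ^ B :=
    mul_nonneg (Real.rpow_nonneg hps0.le A) (Real.rpow_nonneg (by linarith) B)
  calc betaInt a b ≤ ps ^ A * (1-ps) ^ B * ∫ p in (0:ℝ)..1, Real.exp (-(s/2) * (p - ps)^2) := hint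
    _ ≤ ps ^ A * (1-ps) ^ B * Real.sqrt (2 * Real.pi / s) := by
        exact mul_le_mul_of_nonneg_left hgauss hpos
    _ = ((a-1)/(a+b-2)) ^ (a-1) * ((b-1)/(a+b-2)) ^ (b-1) * Real.sqrt (2 * Real.pi / (a+b-2)) := by
        rw [hqs]

lemma kl_quad {ρ x : ℝ} (hρ0 : 0 < ρ) (hρ1 : ρ < 1) (hx : |x| < ρ*(1-ρ)) :
    (ρ+x) * (Real.log (ρ+x) - Real.log ρ) + (1-ρ-x) * (Real.log (1-ρ-x) - Real.log (1-ρ))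
      ≤ 1/(ρ*(1-ρ) - |x|) / 2 * x^2 := by
  have hxρ : |x| < ρ := lt_of_lt_of_le hx (by nlinarith)
  have hxq : |x| < 1-ρ := lt_of_lt_of_le hx (by nlinarith)
  have habs := abs_le.1 (le_of_lt hx)
  set f : ℝ → ℝ := fun y =>
    (ρ+y) * (Real.log (ρ+y) - Real.log ρ) + (1-ρ-y) * (Real.log (1-ρ-y) - Real.log (1-ρ))
    with hfdef
  set f' : ℝ → ℝ := fun y => Real.log (ρ+y) - Real.log ρ - (Real.log (1-ρ-y) - Real.log (1-ρ))
    with hf'def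
  set f'' : ℝ → ℝ := fun y => 1/(ρ+y) + 1/(1-ρ-y) with hf''def
  have hmem : ∀ y ∈ uIcc (0:ℝ) x, |y| ≤ |x| := by
    intro y hy
    rcases le_total 0 x with hc | hc
    · rw [uIcc_of_le hc] at hy
      rw [abs_of_nonneg hy.1, abs_of_nonneg hc]; exact hy.2
    · rw [uIcc_of_ge hc] at hy
      rw [abs_of_nonpos hy.2, abs_of_nonpos hc]; linarith [hy.1]
  have hmem' : ∀ y ∈ uIcc (0:ℝ) x, 0 < ρ+y ∧ 0 < 1-ρ-y := by
    intro y hy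
    have := abs_le.1 (hmem y hy)
    constructor <;> [linarith [hxρ, abs_le.1 (hmem y hy)]; linarith [hxq, abs_le.1 (hmem y hy)]]
  have hd1 : ∀ y ∈ uIcc (0:ℝ) x, HasDerivAt f (f' y) y := by
    intro y hy
    obtain ⟨h1, h2⟩ := hmem' y hy
    have da : HasDerivAt (fun y : ℝ => ρ + y) 1 y := by
      simpa using (hasDerivAt_id y).const_add ρ
    have db : HasDerivAt (fun y : ℝ => 1 - ρ - y) (-1) y := by
      simpa using (hasDerivAt_id y).const_sub (1-ρ)
    have dla : HasDerivAt (fun y : ℝ => Real.log (ρ+y)) (1/(ρ+y)) y := by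
      have := (Real.hasDerivAt_log (ne_of_gt h1)).comp y da
      exact this.congr_deriv (by ring)
    have dlb : HasDerivAt (fun y : ℝ => Real.log (1-ρ-y)) (-(1/(1-ρ-y))) y := by
      have := (Real.hasDerivAt_log (ne_of_gt h2)).comp y db
      exact this.congr_deriv (by ring)
    have dp1 : HasDerivAt (fun y : ℝ => (ρ+y) * (Real.log (ρ+y) - Real.log ρ))
        (1 * (Real.log (ρ+y) - Real.log ρ) + (ρ+y) * (1/(ρ+y))) y :=
      da.mul (dla.sub_const (Real.log ρ))
    have dp2 : HasDerivAt (fun y : ℝ => (1-ρ-y) * (Real.log (1-ρ-y) - Real.log (1-ρ)))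
        ((-1) * (Real.log (1-ρ-y) - Real.log (1-ρ)) + (1-ρ-y) * (-(1/(1-ρ-y)))) y :=
      db.mul (dlb.sub_const (Real.log (1-ρ)))
    have := dp1.add dp2
    have e1 : (ρ+y)*(1/(ρ+y)) = 1 := mul_one_div_cancel h1.ne'
    have e2 : (1-ρ-y)*(-(1/(1-ρ-y))) = -1 := by rw [mul_neg, mul_one_div_cancel h2.ne']
    refine this.congr_deriv ?_
    simp only [hf'def]
    linear_combination e1 + e2
  have hd2 : ∀ y ∈ uIcc (0:ℝ) x, HasDerivAt f' (f'' y) y := by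
    intro y hy
    obtain ⟨h1, h2⟩ := hmem' y hy
    have da : HasDerivAt (fun y : ℝ => ρ + y) 1 y := by
      simpa using (hasDerivAt_id y).const_add ρ
    have db : HasDerivAt (fun y : ℝ => 1 - ρ - y) (-1) y := by
      simpa using (hasDerivAt_id y).const_sub (1-ρ)
    have dla : HasDerivAt (fun y : ℝ => Real.log (ρ+y)) (1/(ρ+y)) y := by
      have := (Real.hasDerivAt_log (ne_of_gt h1)).comp y da
      exact this.congr_deriv (by ring)
    have dlb : HasDerivAt (fun y : ℝ => Real.log (1-ρ-y)) (-(1/(1-ρ-y))) y := by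
      have := (Real.hasDerivAt_log (ne_of_gt h2)).comp y db
      exact this.congr_deriv (by ring)
    have := (dla.sub_const (Real.log ρ)).sub (dlb.sub_const (Real.log (1-ρ)))
    exact this.congr_deriv (by simp only [hf''def]; ring)
  have hcf : ContinuousOn f'' (uIcc (0:ℝ) x) := by
    intro y hy
    obtain ⟨h1, h2⟩ := hmem' y hy
    have c1 : ContinuousAt (fun y : ℝ => 1/(ρ+y)) y :=
      ContinuousAt.div continuousAt_const (by fun_prop) (ne_of_gt h1)
    have c2 : ContinuousAt (fun y : ℝ => 1/(1-ρ-y)) y :=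
      ContinuousAt.div continuousAt_const (by fun_prop) (ne_of_gt h2)
    exact (c1.add c2).continuousWithinAt
  have h0' : f' 0 = 0 := by simp [hf'def]
  have hMb : ∀ y ∈ uIcc (0:ℝ) x, f'' y ≤ 1/(ρ*(1-ρ) - |x|) := by
    intro y hy
    obtain ⟨h1, h2⟩ := hmem' y hy
    have hyx := abs_le.1 (hmem y hy)
    have hprod : ρ*(1-ρ) - |x| ≤ (ρ+y) * (1-ρ-y) := by
      rcases abs_cases y with ⟨he, hy0⟩ | ⟨he, hy0⟩ <;>
        nlinarith [abs_nonneg x, hmem y hy, abs_nonneg y]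
    have hppos : 0 < ρ*(1-ρ) - |x| := by linarith
    have heq : f'' y = 1/((ρ+y) * (1-ρ-y)) := by
      simp only [hf''def]
      field_simp
      ring
    rw [heq]
    exact one_div_le_one_div_of_le hppos hprod
  have key := second_order_bound hd1 hd2 hcf h0' hMb
  simpa [hfdef] using key


/-- AM-GM: `p^h (1-p)^t` is maximized at `p = h/(h+t)`. -/
lemma pow_mul_pow_le_max {h t : ℕ} (hh : 0 < h) (ht : 0 < t) {p : ℝ} (hp0 : 0 ≤ p)
    (hp1 : p ≤ 1) :
    p ^ h * (1-p) ^ t ≤ ((h:ℝ)/((h:ℝ)+t)) ^ h * ((t:ℝ)/((h:ℝ)+t)) ^ t := by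
  set nn : ℝ := (h:ℝ) + t with hnn
  have hn0 : 0 < nn := by
    have h1 : (0:ℝ) < h := by exact_mod_cast hh
    have h2 : (0:ℝ) < t := by exact_mod_cast ht
    linarith
  set w1 : ℝ := (h:ℝ)/nn with hw1
  set w2 : ℝ := (t:ℝ)/nn with hw2
  have hw10 : 0 < w1 := div_pos (by exact_mod_cast hh) hn0
  have hw20 : 0 < w2 := div_pos (by exact_mod_cast ht) hn0
  have hw12 : w1 + w2 = 1 := by
    rw [hw1, hw2, ← add_div, hnn]
    field_simp
  have hgm := Real.geom_mean_le_arith_mean2_weighted hw10.le hw20.le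
    (div_nonneg hp0 hw10.le) (div_nonneg (by linarith : (0:ℝ) ≤ 1-p) hw20.le) hw12
  have hsum : w1 * (p / w1) + w2 * ((1-p) / w2) = 1 := by
    field_simp
    ring
  rw [hsum] at hgm
  have hpow := pow_le_pow_left₀ (mul_nonneg (Real.rpow_nonneg (div_nonneg hp0 hw10.le) _)
    (Real.rpow_nonneg (div_nonneg (by linarith : (0:ℝ) ≤ 1-p) hw20.le) _)) hgm (h+t)
  rw [one_pow, mul_pow] at hpow
  have e1 : ((p / w1) ^ (w1:ℝ)) ^ (h+t) = (p / w1) ^ h := by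
    rw [← Real.rpow_natCast ((p / w1) ^ (w1:ℝ)) (h+t),
      ← Real.rpow_mul (div_nonneg hp0 hw10.le)]
    have : w1 * ((h:ℕ)+(t:ℕ) : ℕ) = (h:ℝ) := by
      push_cast
      rw [hw1, hnn]
      field_simp
    rw [this, Real.rpow_natCast]
  have e2 : (((1-p) / w2) ^ (w2:ℝ)) ^ (h+t) = ((1-p) / w2) ^ t := by
    rw [← Real.rpow_natCast (((1-p) / w2) ^ (w2:ℝ)) (h+t),
      ← Real.rpow_mul (div_nonneg (by linarith : (0:ℝ) ≤ 1-p) hw20.le)]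
    have : w2 * ((h:ℕ)+(t:ℕ) : ℕ) = (t:ℝ) := by
      push_cast
      rw [hw2, hnn]
      field_simp
    rw [this, Real.rpow_natCast]
  rw [e1, e2] at hpow
  have h2 : (p/w1) ^ h * ((1-p)/w2) ^ t * (w1 ^ h * w2 ^ t) = p ^ h * (1-p) ^ t := by
    calc _ = ((p/w1)*w1) ^ h * (((1-p)/w2)*w2) ^ t := by
          rw [mul_pow, mul_pow]; exact mul_mul_mul_comm _ _ _ _
      _ = _ := by rw [div_mul_cancel₀ _ hw10.ne', div_mul_cancel₀ _ hw20.ne']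
  have h1 := mul_le_mul_of_nonneg_right hpow
    (mul_nonneg (pow_nonneg hw10.le h) (pow_nonneg hw20.le t))
  rw [one_mul, h2] at h1
  exact h1

lemma rpow_const_bound {x lo : ℝ} (hlo : 0 < lo) (hx : lo ≤ x) (hx1 : x ≤ 1) (e : ℝ) :
    x ^ e ≤ max 1 (lo ^ e) := by
  rcases le_or_gt 0 e with he | he
  · exact le_max_of_le_left (Real.rpow_le_one (by linarith) hx1 he)
  · exact le_max_of_le_right (Real.rpow_le_rpow_of_nonpos hlo hx he.le)

lemma sum_moves (ρ : ℝ) (ε : ℕ → Bool) (n : ℕ) :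
    ∑ i ∈ range n, move ρ ε i = (headsCount ε n : ℝ) - n * ρ := by
  have : ∀ i, move ρ ε i = (if ε i = true then (1:ℝ) else 0) - ρ := by
    intro i
    unfold move
    by_cases h : ε i <;> simp [h]
  rw [Finset.sum_congr rfl (fun i _ => this i), Finset.sum_sub_distrib]
  simp [headsCount, Finset.sum_boole, mul_comm]

lemma headsCount_le (ε : ℕ → Bool) (n : ℕ) : headsCount ε n ≤ n := by
  simpa [headsCount] using (Finset.card_filter_le (range n) (fun i => ε i = true)).trans
    (le_of_eq (card_range n))

lemma heads_eq (ρ : ℝ) (ε : ℕ → Bool) {n : ℕ} (hn : 0 < n) :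
    (headsCount ε n : ℝ) = n * (ρ + avg ρ ε n) := by
  have hn0 : (n:ℝ) ≠ 0 := by positivity
  unfold avg
  rw [sum_moves]
  field_simp
  ring


end AuxiliaryLemmas

set_option maxHeartbeats 2000000 in
/-- Necessity in Theorem 3: if the beta-binomial capital satisfies `limsup K_n = ∞`, then
`limsup √n |x̄_n|/√(log n) ≥ √(ρ(1-ρ))`. -/
theorem betaBinomial_capital_unbounded_necessary (α β ρ : ℝ)
    (hα : 0 < α) (hβ : 0 < β) (hρ0 : 0 < ρ) (hρ1 : ρ < 1) (ε : ℕ → Bool)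
    (hK : atTop.limsup (fun n : ℕ => ((betaBinomialCapital α β ρ ε n : ℝ) : EReal)) = ⊤) :
    (Real.sqrt (ρ * (1 - ρ)) : EReal)
      ≤ atTop.limsup (fun n : ℕ =>
          ((Real.sqrt n * |avg ρ ε n| / Real.sqrt (Real.log n) : ℝ) : EReal)) := by
  by_contra hcon
  push_neg at hcon
  have hκ : 0 < ρ * (1-ρ) := by nlinarith
  set κ : ℝ := ρ * (1 - ρ) with hκdef
  set L : ℕ → ℝ := fun n => Real.sqrt n * |avg ρ ε n| / Real.sqrt (Real.log n) with hLdef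
  set T : EReal := atTop.limsup (fun n : ℕ => ((L n : ℝ) : EReal)) with hTdef
  have hL0 : ∀ n, 0 ≤ L n := fun n => by positivity
  have hT0 : (0:EReal) ≤ T :=
    Filter.le_limsup_of_frequently_le
      (Frequently.of_forall fun n => by exact_mod_cast hL0 n) (by isBoundedDefault)
  have hcon' : T < ((Real.sqrt (ρ*(1-ρ)) : ℝ) : EReal) := hcon
  have hTtop : T ≠ ⊤ := ne_top_of_lt hcon'
  have hTbot : T ≠ ⊥ := fun hb => by rw [hb] at hT0; exact absurd hT0 (by simp)
  set r : ℝ := T.toReal with hrdef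
  have hrT : (r : EReal) = T := EReal.coe_toReal hTtop hTbot
  have hr0 : 0 ≤ r := by
    have := hT0
    rw [← hrT] at this
    exact_mod_cast this
  have hrκ : r < Real.sqrt κ := by
    rw [← hrT] at hcon'
    exact_mod_cast hcon'
  set c : ℝ := (r + Real.sqrt κ) / 2 with hcdef
  have hsκ : 0 < Real.sqrt κ := Real.sqrt_pos.2 hκ
  have hc0 : 0 < c := by rw [hcdef]; linarith
  have hcκ : c < Real.sqrt κ := by rw [hcdef]; linarith
  have hc2 : c ^ 2 < κ := (Real.lt_sqrt hc0.le).1 hcκ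
  -- eventually L n < c
  have hevL : ∀ᶠ n in atTop, L n < c := by
    have hTc : T < ((c:ℝ) : EReal) := by
      rw [← hrT]
      exact_mod_cast (show r < c by rw [hcdef]; linarith)
    have := Filter.eventually_lt_of_limsup_lt hTc
    filter_upwards [this] with n hn
    exact_mod_cast hn
  -- eventually |x̄ n| ≤ c √(log n / n)
  have hevX : ∀ᶠ n : ℕ in atTop, |avg ρ ε n| ≤ c * Real.sqrt (Real.log n / n) := by
    filter_upwards [hevL, Filter.eventually_ge_atTop 3] with n hn hn3
    have hlog : 0 < Real.log n := Real.log_pos (by exact_mod_cast (by omega : 1 < n))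
    have hn0 : 0 < (n:ℝ) := by exact_mod_cast (by omega : 0 < n)
    have hsl : 0 < Real.sqrt (Real.log n) := Real.sqrt_pos.2 hlog
    have hsn : 0 < Real.sqrt n := Real.sqrt_pos.2 hn0
    have hmul : Real.sqrt n * |avg ρ ε n| ≤ c * Real.sqrt (Real.log n) := by
      have h1 : L n < c := hn
      rw [hLdef] at h1
      simp only at h1
      rw [div_lt_iff₀ hsl] at h1
      linarith
    calc |avg ρ ε n| = Real.sqrt n * |avg ρ ε n| / Real.sqrt n := by
          field_simp
      _ ≤ c * Real.sqrt (Real.log n) / Real.sqrt n := by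
          exact (div_le_div_iff_of_pos_right hsn).2 hmul
      _ = c * Real.sqrt (Real.log n / n) := by
          rw [Real.sqrt_div hlog.le, mul_div_assoc]
  -- the bound tends to 0
  have hg0 : Tendsto (fun n : ℕ => c * Real.sqrt (Real.log n / n)) atTop (nhds 0) := by
    have h1 : Tendsto (fun x : ℝ => Real.log x / x) atTop (nhds 0) := by
      simpa using Real.isLittleO_log_id_atTop.tendsto_div_nhds_zero
    have h2 := h1.comp tendsto_natCast_atTop_atTop
    have h3 := (Real.continuous_sqrt.tendsto' 0 0 (by simp)).comp h2
    simpa using h3.const_mul c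
  set η : ℝ := (κ - c^2) / 2 with hηdef
  have hη0 : 0 < η := by rw [hηdef]; linarith
  have hκη : κ - η = (κ + c^2)/2 := by rw [hηdef]; ring
  set M' : ℝ := 1 / (κ - η) with hM'def
  have hκη0 : 0 < κ - η := by rw [hκη]; positivity
  have hM'0 : 0 < M' := by rw [hM'def]; positivity
  have hM'c2 : M' * c^2 < 1 := by
    rw [hM'def, hκη]
    rw [div_mul_eq_mul_div, div_lt_one (by positivity)]
    nlinarith
  set δ₀ : ℝ := min (min (ρ/2) ((1-ρ)/2)) η with hδdef
  have hδ0 : 0 < δ₀ := by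
    rw [hδdef]
    apply lt_min (lt_min (by linarith) (by linarith)) hη0
  have hevδ : ∀ᶠ n : ℕ in atTop, |avg ρ ε n| ≤ δ₀ := by
    have := hg0.eventually_lt_const hδ0
    filter_upwards [hevX, this] with n h1 h2
    linarith
  -- constants
  have hI₀ : 0 < betaInt (α+1) (β+1) := betaInt_pos (by linarith) (by linarith)
  set I₀ : ℝ := betaInt (α+1) (β+1) with hI₀def
  set cstar : ℝ := α * β / ((α+β) * (α+β+1) * I₀) with hcstardef
  have hcstar0 : 0 < cstar := by rw [hcstardef]; positivity
  set Cα : ℝ := max 1 ((ρ/8) ^ (α-1 : ℝ)) with hCαdef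
  set Cβ : ℝ := max 1 (((1-ρ)/8) ^ (β-1 : ℝ)) with hCβdef
  have hCα0 : 0 < Cα := lt_of_lt_of_le one_pos (le_max_left _ _)
  have hCβ0 : 0 < Cβ := lt_of_lt_of_le one_pos (le_max_left _ _)
  set Cfinal : ℝ := cstar * Cα * Cβ * Real.sqrt (4 * Real.pi) with hCfdef
  have hge : ∀ C : ℝ, ∀ᶠ n : ℕ in atTop, C ≤ (n:ℝ) := fun C =>
    tendsto_natCast_atTop_atTop.eventually_ge_atTop C
  -- main eventual bound
  have hevK : ∀ᶠ n : ℕ in atTop, betaBinomialCapital α β ρ ε n ≤ Cfinal := by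
    filter_upwards [hevX, hevδ, hge (8/ρ), hge (8/(1-ρ)), hge (2*(2-(α+β))), hge (α+β),
      Filter.eventually_ge_atTop 1] with n hx1 hx2 hn1 hn2 hn3 hn4 hn5
    set x : ℝ := avg ρ ε n with hxdef
    set h : ℕ := headsCount ε n with hhdef
    set t : ℕ := n - h with htdef
    have hhn : h ≤ n := headsCount_le ε n
    have hht : h + t = n := by omega
    have hnpos : 0 < n := hn5
    have hnR : (0:ℝ) < n := by exact_mod_cast hnpos
    have hnR1 : (1:ℝ) ≤ n := by exact_mod_cast hn5
    have hhr : (h:ℝ) = n * (ρ + x) := heads_eq ρ ε hnpos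
    have htr : (t:ℝ) = n * (1 - ρ - x) := by
      have : (t:ℝ) = (n:ℝ) - h := by
        rw [htdef]; push_cast [Nat.cast_sub hhn]; ring
      rw [this, hhr]; ring
    have habs := abs_le.1 hx2
    have hδρ : δ₀ ≤ ρ/2 := le_trans (min_le_left _ _) (min_le_left _ _)
    have hδq : δ₀ ≤ (1-ρ)/2 := le_trans (min_le_left _ _) (min_le_right _ _)
    have hδη : δ₀ ≤ η := min_le_right _ _
    have hplo : ρ/2 ≤ ρ + x := by linarith [habs.1]
    have hqlo : (1-ρ)/2 ≤ 1 - ρ - x := by linarith [habs.2]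
    have hppos : 0 < ρ + x := by linarith
    have hqpos : 0 < 1 - ρ - x := by linarith
    have hnρ8 : 8 ≤ (n:ℝ) * ρ := by
      rw [div_le_iff₀ hρ0] at hn1; linarith
    have hnq8 : 8 ≤ (n:ℝ) * (1-ρ) := by
      rw [div_le_iff₀ (by linarith : (0:ℝ) < 1-ρ)] at hn2; linarith
    have e4 : (n:ℝ)*(ρ/2) ≤ (n:ℝ)*(ρ+x) := mul_le_mul_of_nonneg_left hplo hnR.le
    have e5 : (n:ℝ)*(ρ/2) = ((n:ℝ)*ρ)/2 := by ring
    have e4' : (n:ℝ)*((1-ρ)/2) ≤ (n:ℝ)*(1-ρ-x) := mul_le_mul_of_nonneg_left hqlo hnR.le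
    have e5' : (n:ℝ)*((1-ρ)/2) = ((n:ℝ)*(1-ρ))/2 := by ring
    have hh1R : (1:ℝ) ≤ (h:ℝ) := by rw [hhr]; linarith
    have ht1R : (1:ℝ) ≤ (t:ℝ) := by rw [htr]; linarith
    have hh1 : 1 ≤ h := by exact_mod_cast hh1R
    have ht1 : 1 ≤ t := by exact_mod_cast ht1R
    -- identity
    have key := rf_betaInt hα hβ hh1 ht1
    rw [hht] at key
    set B : ℝ := betaInt (α+(h:ℝ)) (β+(t:ℝ)) with hBdef
    have hBpos : 0 < B := betaInt_pos (by linarith) (by linarith)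
    have hrfn : 0 < risingFactorial (α+β) n := rf_pos (by linarith) n
    have hRpos : 0 < ρ ^ h * (1-ρ) ^ t := mul_pos (pow_pos hρ0 h) (pow_pos (by linarith) t)
    have hKeq : betaBinomialCapital α β ρ ε n = cstar * B / (ρ ^ h * (1-ρ) ^ t) := by
      unfold betaBinomialCapital
      rw [← hhdef, ← htdef, hcstardef]
      rw [div_eq_div_iff (mul_pos (mul_pos hrfn (pow_pos hρ0 h))
        (pow_pos (by linarith : (0:ℝ) < 1-ρ) t)).ne'
        (mul_pos (pow_pos hρ0 h) (pow_pos (by linarith : (0:ℝ) < 1-ρ) t)).ne']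
      rw [div_mul_eq_mul_div, div_mul_eq_mul_div, eq_div_iff (mul_pos (by positivity) hI₀).ne']
      linear_combination (ρ ^ h * (1-ρ) ^ t) * key
    -- Laplace bound
    set Dn : ℝ := (n:ℝ) + α + β - 2 with hDndef
    have hDn2 : (n:ℝ)/2 ≤ Dn := by rw [hDndef]; linarith
    have hDnpos : 0 < Dn := by linarith
    have hab2 : (α+(h:ℝ)) + (β+(t:ℝ)) - 2 = Dn := by
      rw [hDndef]
      have : (h:ℝ) + t = n := by exact_mod_cast congrArg (Nat.cast : ℕ → ℝ) hht
      push_cast at this ⊢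
      linarith
    set Ps : ℝ := (α+(h:ℝ)-1)/Dn with hPsdef
    set Qs : ℝ := (β+(t:ℝ)-1)/Dn with hQsdef
    have hlap : B ≤ Ps ^ (α+(h:ℝ)-1) * Qs ^ (β+(t:ℝ)-1) * Real.sqrt (2*Real.pi/Dn) := by
      have := betaInt_le_laplace (by linarith : 1 < α+(h:ℝ)) (by linarith : 1 < β+(t:ℝ))
      rw [hab2] at this
      convert this using 3 <;> ring
    have hPQ1 : Ps + Qs = 1 := by
      rw [hPsdef, hQsdef, ← add_div, div_eq_one_iff_eq (ne_of_gt hDnpos), ← hab2]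
      ring
    have eD : Dn ≤ 2*(n:ℝ) := by rw [hDndef]; linarith [hn4]
    have hPslo : ρ/8 ≤ Ps := by
      rw [hPsdef, le_div_iff₀ hDnpos]
      have e2 : ρ/8*Dn ≤ ρ/8*(2*(n:ℝ)) := mul_le_mul_of_nonneg_left eD (by positivity)
      have e3 : ρ/8*(2*(n:ℝ)) = ((n:ℝ)*ρ)/4 := by ring
      have e6 : (n:ℝ)*(ρ+x) = (h:ℝ) := hhr.symm
      linarith
    have hQslo : (1-ρ)/8 ≤ Qs := by
      rw [hQsdef, le_div_iff₀ hDnpos]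
      have e2 : (1-ρ)/8*Dn ≤ (1-ρ)/8*(2*(n:ℝ)) :=
        mul_le_mul_of_nonneg_left eD (by linarith : (0:ℝ) ≤ (1-ρ)/8)
      have e3 : (1-ρ)/8*(2*(n:ℝ)) = ((n:ℝ)*(1-ρ))/4 := by ring
      have e6 : (n:ℝ)*(1-ρ-x) = (t:ℝ) := htr.symm
      linarith
    have hPspos : 0 < Ps := lt_of_lt_of_le (by linarith) hPslo
    have hQspos : 0 < Qs := lt_of_lt_of_le (by linarith) hQslo
    have hPs1 : Ps ≤ 1 := by linarith
    have hQs1 : Qs ≤ 1 := by linarith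
    -- split rpow
    have hsplitP : Ps ^ (α+(h:ℝ)-1) = Ps ^ (α-1 : ℝ) * Ps ^ h := by
      rw [show (α+(h:ℝ)-1) = (α-1) + (h:ℝ) by ring, Real.rpow_add hPspos, Real.rpow_natCast]
    have hsplitQ : Qs ^ (β+(t:ℝ)-1) = Qs ^ (β-1 : ℝ) * Qs ^ t := by
      rw [show (β+(t:ℝ)-1) = (β-1) + (t:ℝ) by ring, Real.rpow_add hQspos, Real.rpow_natCast]
    have hCαb : Ps ^ (α-1 : ℝ) ≤ Cα := rpow_const_bound (by linarith) hPslo hPs1 (α-1)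
    have hCβb : Qs ^ (β-1 : ℝ) ≤ Cβ := rpow_const_bound (by linarith) hQslo hQs1 (β-1)
    -- AM-GM
    have hamgm : Ps ^ h * Qs ^ t ≤ (ρ+x) ^ h * (1-ρ-x) ^ t := by
      have := pow_mul_pow_le_max (by omega : 0 < h) (by omega : 0 < t) hPspos.le hPs1 (p := Ps)
      have hQeq : 1 - Ps = Qs := by linarith
      rw [hQeq] at this
      have hhtn : (h:ℝ) + t = (n:ℝ) := by exact_mod_cast congrArg (Nat.cast : ℕ → ℝ) hht
      have e1 : (h:ℝ)/((h:ℝ)+t) = ρ + x := by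
        rw [hhtn, hhr]; field_simp
      have e2 : (t:ℝ)/((h:ℝ)+t) = 1 - ρ - x := by
        rw [hhtn, htr]; field_simp
      rw [e1, e2] at this
      exact this
    -- exp identity
    set fKL : ℝ := (ρ+x) * (Real.log (ρ+x) - Real.log ρ)
      + (1-ρ-x) * (Real.log (1-ρ-x) - Real.log (1-ρ)) with hfKLdef
    have hexp : (ρ+x) ^ h * (1-ρ-x) ^ t = ρ ^ h * (1-ρ) ^ t * Real.exp ((n:ℝ) * fKL) := by
      have harg : (n:ℝ) * fKL = ((h:ℝ) * Real.log (ρ+x) - (h:ℝ) * Real.log ρ)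
          + ((t:ℝ) * Real.log (1-ρ-x) - (t:ℝ) * Real.log (1-ρ)) := by
        rw [hfKLdef, hhr, htr]; ring
      rw [harg, Real.exp_add, Real.exp_sub, Real.exp_sub,
        Real.exp_nat_mul, Real.exp_nat_mul, Real.exp_nat_mul, Real.exp_nat_mul,
        Real.exp_log hppos, Real.exp_log hqpos, Real.exp_log hρ0,
        Real.exp_log (by linarith : (0:ℝ) < 1-ρ)]
      field_simp
      exact (div_self (pow_pos (sub_pos.2 hρ1) t).ne').symm
    -- KL bound
    have hklq := kl_quad hρ0 hρ1 (lt_of_le_of_lt (hx2.trans hδη) (by linarith) : |x| < ρ*(1-ρ))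
    have hMle : 1/(ρ*(1-ρ) - |x|) ≤ M' := by
      rw [hM'def]
      apply one_div_le_one_div_of_le hκη0
      have h1 : |x| ≤ η := hx2.trans hδη
      have h2 : κ = ρ*(1-ρ) := hκdef
      linarith
    have hfKLle : fKL ≤ M'/2 * x^2 := by
      have h1 : fKL ≤ 1/(ρ*(1-ρ) - |x|)/2 * x^2 := hklq
      have h2 : 1/(ρ*(1-ρ) - |x|)/2 * x^2 ≤ M'/2 * x^2 := by
        apply mul_le_mul_of_nonneg_right _ (sq_nonneg x)
        linarith
      linarith
    have hx2sq : x^2 ≤ c^2 * (Real.log n / n) := by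
      have hlogn0 : 0 ≤ Real.log n := Real.log_nonneg hnR1
      have h1 : |x| ≤ c * Real.sqrt (Real.log n / n) := hx1
      have h2 : x^2 = |x|^2 := (sq_abs x).symm
      have h3 : |x|^2 ≤ (c * Real.sqrt (Real.log n / n))^2 :=
        pow_le_pow_left₀ (abs_nonneg x) h1 2
      rw [mul_pow, Real.sq_sqrt (by positivity)] at h3
      linarith
    have hnfKL : (n:ℝ) * fKL ≤ (M' * c^2 / 2) * Real.log n := by
      have h1 : (n:ℝ) * fKL ≤ (n:ℝ) * (M'/2 * x^2) :=
        mul_le_mul_of_nonneg_left hfKLle hnR.le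
      have h2 : (n:ℝ) * (M'/2 * x^2) ≤ (n:ℝ) * (M'/2 * (c^2 * (Real.log n / n))) := by
        apply mul_le_mul_of_nonneg_left _ hnR.le
        apply mul_le_mul_of_nonneg_left hx2sq (by positivity)
      have h3 : (n:ℝ) * (M'/2 * (c^2 * (Real.log n / n))) = (M' * c^2 / 2) * Real.log n := by
        field_simp
      linarith
    have hexple : Real.exp ((n:ℝ) * fKL) ≤ (n:ℝ) ^ (M' * c^2 / 2 : ℝ) := by
      rw [Real.rpow_def_of_pos hnR]
      apply Real.exp_le_exp.2
      have := mul_comm (Real.log (n:ℝ)) (M' * c^2 / 2)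
      linarith
    -- gaussian tail
    have hgtail : Real.sqrt (2*Real.pi/Dn) ≤ Real.sqrt (4*Real.pi) * (n:ℝ) ^ (-(1:ℝ)/2) := by
      have h1 : 2*Real.pi/Dn ≤ 4*Real.pi/n := by
        have h1b : 4*Real.pi/(n:ℝ) = 2*Real.pi/((n:ℝ)/2) := by
          field_simp
          ring
        rw [h1b]
        exact div_le_div_of_nonneg_left (by positivity) (by positivity) hDn2
      have h2 : Real.sqrt (2*Real.pi/Dn) ≤ Real.sqrt (4*Real.pi/n) := Real.sqrt_le_sqrt h1
      have h3 : Real.sqrt (4*Real.pi/n) = Real.sqrt (4*Real.pi) * (n:ℝ) ^ (-(1:ℝ)/2) := by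
        rw [Real.sqrt_div (by positivity) n, Real.sqrt_eq_rpow (n:ℝ),
          show (-(1:ℝ)/2) = -((1:ℝ)/2) by norm_num, Real.rpow_neg hnR.le, div_eq_mul_inv]
      rw [h3] at h2
      exact h2
    -- final combination
    rw [hKeq]
    have hchain : B ≤ Cα * Cβ * (ρ ^ h * (1-ρ) ^ t)
        * ((n:ℝ) ^ (M' * c^2 / 2 : ℝ) * (Real.sqrt (4*Real.pi) * (n:ℝ) ^ (-(1:ℝ)/2))) := by
      calc B ≤ Ps ^ (α+(h:ℝ)-1) * Qs ^ (β+(t:ℝ)-1) * Real.sqrt (2*Real.pi/Dn) := hlap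
        _ = (Ps ^ (α-1:ℝ) * Qs ^ (β-1:ℝ)) * (Ps ^ h * Qs ^ t) * Real.sqrt (2*Real.pi/Dn) := by
            rw [hsplitP, hsplitQ]; ring
        _ ≤ (Cα * Cβ) * ((ρ+x) ^ h * (1-ρ-x) ^ t) * (Real.sqrt (4*Real.pi) * (n:ℝ) ^ (-(1:ℝ)/2)) := by
            apply mul_le_mul
            · apply mul_le_mul
              · exact mul_le_mul hCαb hCβb (Real.rpow_nonneg hQspos.le _) hCα0.le
              · exact hamgm
              · positivity
              · positivity
            · exact hgtail
            · exact Real.sqrt_nonneg _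
            · positivity
        _ ≤ (Cα * Cβ) * (ρ ^ h * (1-ρ) ^ t * (n:ℝ) ^ (M' * c^2 / 2 : ℝ))
              * (Real.sqrt (4*Real.pi) * (n:ℝ) ^ (-(1:ℝ)/2)) := by
            apply mul_le_mul_of_nonneg_right _ (by positivity)
            apply mul_le_mul_of_nonneg_left _ (by positivity)
            rw [hexp]
            exact mul_le_mul_of_nonneg_left hexple hRpos.le
        _ = Cα * Cβ * (ρ ^ h * (1-ρ) ^ t)
              * ((n:ℝ) ^ (M' * c^2 / 2 : ℝ) * (Real.sqrt (4*Real.pi) * (n:ℝ) ^ (-(1:ℝ)/2))) := by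
            ring
    have hrpow1 : (n:ℝ) ^ (M' * c^2 / 2 : ℝ) * (n:ℝ) ^ (-(1:ℝ)/2) ≤ 1 := by
      rw [← Real.rpow_add hnR]
      apply Real.rpow_le_one_of_one_le_of_nonpos hnR1
      linarith
    calc cstar * B / (ρ ^ h * (1-ρ) ^ t)
        ≤ cstar * (Cα * Cβ * (ρ ^ h * (1-ρ) ^ t)
            * ((n:ℝ) ^ (M' * c^2 / 2 : ℝ) * (Real.sqrt (4*Real.pi) * (n:ℝ) ^ (-(1:ℝ)/2))))
            / (ρ ^ h * (1-ρ) ^ t) := by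
          apply (div_le_div_iff_of_pos_right hRpos).2
          exact mul_le_mul_of_nonneg_left hchain hcstar0.le
      _ = cstar * Cα * Cβ * Real.sqrt (4*Real.pi)
            * ((n:ℝ) ^ (M' * c^2 / 2 : ℝ) * (n:ℝ) ^ (-(1:ℝ)/2)) := by
          field_simp
          ring
          rw [← mul_pow, inv_mul_cancel₀ (sub_pos.2 hρ1).ne', one_pow]
      _ ≤ cstar * Cα * Cβ * Real.sqrt (4*Real.pi) * 1 := by
          apply mul_le_mul_of_nonneg_left hrpow1 (by positivity)
      _ = Cfinal := by rw [hCfdef]; ring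
  -- contradiction with limsup = ⊤
  have hle : atTop.limsup (fun n : ℕ => ((betaBinomialCapital α β ρ ε n : ℝ) : EReal))
      ≤ ((Cfinal : ℝ) : EReal) := by
    refine Filter.limsup_le_of_le (by isBoundedDefault) ?_
    filter_upwards [hevK] with n hn
    exact_mod_cast hn
  rw [hK] at hle
  exact absurd hle (by simp)
end

section
/- For all α, β > 0, 0 < ρ < 1, and nonnegative integers h, t with n = h + t ≥ 1 and min(α+h, β+t) sufficiently large, the ratio of the extreme hypergeometric capital K_n*(ξⁿ) = h! t!/(n! ρ^h (1-ρ)^t) to the beta-binomial capital K_n^{α,β}(ξⁿ) satisfies log(K_n*/K_n^{α,β}) = log n + (1-α)·log(h/n) + (1-β)·log(t/n) + log B(α,β) + O(1/min(α+h, β+t)), with an explicit constant in the O-term depending only on α and β. -/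
lemma log_add_div {x s : ℝ} (hx : 0 < x) (hs : 0 ≤ s) :
    Real.log (x + s) - Real.log x ≤ s / x := by
  rw [← Real.log_div (by positivity) (ne_of_gt hx)]
  have h := Real.log_le_sub_one_of_pos (show (0:ℝ) < (x+s)/x by positivity)
  have h2 : (x + s)/x - 1 = s / x := by field_simp; ring
  linarith

lemma wendel {x s : ℝ} (hx : 1 ≤ x) (hs0 : 0 ≤ s) (hs1 : s ≤ 1) :
    |Real.log (Real.Gamma (x + s)) - Real.log (Real.Gamma x) - s * Real.log x| ≤ 1 / x := by
  have hx0 : 0 < x := lt_of_lt_of_le one_pos hx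
  have hxs : 0 < x + s := by linarith
  have hG := Real.convexOn_log_Gamma
  have hG1 : Real.log (Real.Gamma (x + 1)) = Real.log x + Real.log (Real.Gamma x) := by
    rw [Real.Gamma_add_one (ne_of_gt hx0),
      Real.log_mul (ne_of_gt hx0) (ne_of_gt (Real.Gamma_pos_of_pos hx0))]
  have hGs1 : Real.log (Real.Gamma (x + s + 1))
      = Real.log (x + s) + Real.log (Real.Gamma (x + s)) := by
    rw [Real.Gamma_add_one (ne_of_gt hxs),
      Real.log_mul (ne_of_gt hxs) (ne_of_gt (Real.Gamma_pos_of_pos hxs))]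
  have hup : Real.log (Real.Gamma (x + s)) ≤
      (1 - s) * Real.log (Real.Gamma x) + s * Real.log (Real.Gamma (x + 1)) := by
    have h2 := hG.2 (Set.mem_Ioi.mpr hx0) (Set.mem_Ioi.mpr (show (0:ℝ) < x + 1 by linarith))
      (show (0:ℝ) ≤ 1 - s by linarith) hs0 (by ring)
    simpa [smul_eq_mul, show (1 - s) * x + s * (x + 1) = x + s by ring] using h2
  have hlow : Real.log (Real.Gamma (x + 1)) ≤
      s * Real.log (Real.Gamma (x + s)) + (1 - s) * Real.log (Real.Gamma (x + s + 1)) := by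
    have h2 := hG.2 (Set.mem_Ioi.mpr hxs) (Set.mem_Ioi.mpr (show (0:ℝ) < x + s + 1 by linarith))
      hs0 (show (0:ℝ) ≤ 1 - s by linarith) (by linarith)
    simpa [smul_eq_mul, show s * (x + s) + (1 - s) * (x + s + 1) = x + 1 by ring] using h2
  rw [hG1] at hup hlow
  rw [hGs1] at hlow
  have hd1 : Real.log (x + s) - Real.log x ≤ s / x := log_add_div hx0 hs0
  have hd0 : Real.log x ≤ Real.log (x + s) := Real.log_le_log hx0 (by linarith)
  have hup' : Real.log (Real.Gamma (x + s)) - Real.log (Real.Gamma x) - s * Real.log x ≤ 0 := by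
    nlinarith [hup]
  have hlow' : Real.log (Real.Gamma x) + Real.log x
      ≤ Real.log (Real.Gamma (x + s)) + (1 - s) * Real.log (x + s) := by
    nlinarith [hlow]
  have hkey : (1 - s) * (Real.log (x + s) - Real.log x) ≤ 1 / x := by
    have h1 : (1 - s) * (Real.log (x + s) - Real.log x) ≤ (1 - s) * (s / x) :=
      mul_le_mul_of_nonneg_left hd1 (by linarith)
    have hss : (1 - s) * s ≤ 1 := by nlinarith
    have h2 : (1 - s) * (s / x) ≤ 1 / x := by
      calc (1 - s) * (s / x) = ((1 - s) * s) / x := by ring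
      _ ≤ 1 / x := by gcongr
    linarith
  have hpos : 0 < 1 / x := by positivity
  rw [abs_le]
  constructor
  · nlinarith [hlow', hkey]
  · linarith [hup']

lemma L_nat (k : ℕ) : ∀ x s : ℝ, 1 ≤ x → 0 ≤ s → s ≤ 1 →
    |Real.log (Real.Gamma (x + ((k : ℝ) + s))) - Real.log (Real.Gamma x)
      - ((k : ℝ) + s) * Real.log x| ≤ ((k : ℝ) + 1) ^ 2 / x := by
  induction k with
  | zero =>
    intro x s hx h0 h1
    simpa using wendel hx h0 h1
  | succ k ih =>
    intro x s hx h0 h1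
    have hx0 : 0 < x := lt_of_lt_of_le one_pos hx
    have hx1 : (1:ℝ) ≤ x + 1 := by linarith
    have hA := ih (x + 1) s hx1 h0 h1
    have hA' : |Real.log (Real.Gamma ((x + 1) + ((k : ℝ) + s))) - Real.log (Real.Gamma (x + 1))
        - ((k : ℝ) + s) * Real.log (x + 1)| ≤ ((k : ℝ) + 1) ^ 2 / x := by
      refine hA.trans ?_
      gcongr
      linarith
    have hmid : Real.log (Real.Gamma (x + 1)) = Real.log x + Real.log (Real.Gamma x) := by
      rw [Real.Gamma_add_one (ne_of_gt hx0),
        Real.log_mul (ne_of_gt hx0) (ne_of_gt (Real.Gamma_pos_of_pos hx0))]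
    have hl1 : Real.log x ≤ Real.log (x + 1) := Real.log_le_log hx0 (by linarith)
    have hl2 : Real.log (x + 1) - Real.log x ≤ 1 / x := log_add_div hx0 zero_le_one
    have hY : |((k : ℝ) + s) * (Real.log (x + 1) - Real.log x)| ≤ ((k : ℝ) + 1) / x := by
      rw [abs_mul, abs_of_nonneg (by positivity : (0:ℝ) ≤ (k:ℝ) + s),
        abs_of_nonneg (by linarith)]
      have hk1 : (k : ℝ) + s ≤ (k : ℝ) + 1 := by linarith
      have := mul_le_mul hk1 hl2 (by linarith) (by positivity)
      calc ((k : ℝ) + s) * (Real.log (x + 1) - Real.log x)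
          ≤ ((k : ℝ) + 1) * (1 / x) := this
        _ = ((k : ℝ) + 1) / x := by ring
    have hkey : Real.log (Real.Gamma (x + (((k : ℕ) + 1 : ℕ) + s))) - Real.log (Real.Gamma x)
        - (((k : ℕ) + 1 : ℕ) + s) * Real.log x
        = (Real.log (Real.Gamma ((x + 1) + ((k : ℝ) + s))) - Real.log (Real.Gamma (x + 1))
            - ((k : ℝ) + s) * Real.log (x + 1))
          + ((k : ℝ) + s) * (Real.log (x + 1) - Real.log x)
          + (Real.log (Real.Gamma (x + 1)) - Real.log (Real.Gamma x) - Real.log x) := by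
      have harg : x + (((k : ℕ) + 1 : ℕ) + s) = (x + 1) + ((k : ℝ) + s) := by
        push_cast; ring
      rw [harg]; push_cast; ring
    have hz : Real.log (Real.Gamma (x + 1)) - Real.log (Real.Gamma x) - Real.log x = 0 := by
      rw [hmid]; ring
    calc |Real.log (Real.Gamma (x + (((k : ℕ) + 1 : ℕ) + s))) - Real.log (Real.Gamma x)
        - (((k : ℕ) + 1 : ℕ) + s) * Real.log x|
        = |(Real.log (Real.Gamma ((x + 1) + ((k : ℝ) + s))) - Real.log (Real.Gamma (x + 1))
            - ((k : ℝ) + s) * Real.log (x + 1))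
          + ((k : ℝ) + s) * (Real.log (x + 1) - Real.log x)| := by rw [hkey, hz, add_zero]
      _ ≤ |Real.log (Real.Gamma ((x + 1) + ((k : ℝ) + s))) - Real.log (Real.Gamma (x + 1))
            - ((k : ℝ) + s) * Real.log (x + 1)|
          + |((k : ℝ) + s) * (Real.log (x + 1) - Real.log x)| := abs_add_le _ _
      _ ≤ ((k : ℝ) + 1) ^ 2 / x + ((k : ℝ) + 1) / x := add_le_add hA' hY
      _ ≤ (((k : ℕ) + 1 : ℕ) + 1) ^ 2 / x := by
          rw [← add_div]
          gcongr
          push_cast; nlinarith [Nat.cast_nonneg (α := ℝ) k]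
      _ = ((((k : ℕ) + 1 : ℕ) : ℝ) + 1) ^ 2 / x := by norm_cast

lemma L_bound {x a : ℝ} (hx : 1 ≤ x) (ha : 0 < a) :
    |Real.log (Real.Gamma (x + a)) - Real.log (Real.Gamma x) - a * Real.log x|
      ≤ (a + 1) ^ 2 / x := by
  have hx0 : 0 < x := lt_of_lt_of_le one_pos hx
  set k := ⌊a⌋₊ with hk
  have hks : (k : ℝ) ≤ a := Nat.floor_le ha.le
  have hka : a < (k : ℝ) + 1 := Nat.lt_floor_add_one a
  have h := L_nat k x (a - k) hx (by linarith) (by linarith)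
  rw [show (k : ℝ) + (a - k) = a by ring] at h
  refine h.trans ?_
  gcongr


lemma Beta_pos {a b : ℝ} (ha : 0 < a) (hb : 0 < b) : 0 < Beta a b := by
  have h1 := Real.Gamma_pos_of_pos ha
  have h2 := Real.Gamma_pos_of_pos hb
  have h3 := Real.Gamma_pos_of_pos (add_pos ha hb)
  unfold Beta; positivity

lemma log_Beta {a b : ℝ} (ha : 0 < a) (hb : 0 < b) :
    Real.log (Beta a b) = Real.log (Real.Gamma a) + Real.log (Real.Gamma b)
      - Real.log (Real.Gamma (a + b)) := by
  have h1 := Real.Gamma_pos_of_pos ha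
  have h2 := Real.Gamma_pos_of_pos hb
  have h3 := Real.Gamma_pos_of_pos (add_pos ha hb)
  unfold Beta
  rw [Real.log_div (by positivity) (ne_of_gt h3), Real.log_mul (ne_of_gt h1) (ne_of_gt h2)]

set_option maxHeartbeats 1000000 in
/-- The ratio of the extreme hypergeometric capital `K* = h! t!/(n! ρ^h (1-ρ)^t)` to the
beta-binomial capital `K^{α,β}` (this ratio is `(h! t!/n!) B(α,β)/B(α+h, β+t)`, with the
risk-neutral factor cancelling) satisfies
`log(K*/K^{α,β}) = log n + (1-α) log(h/n) + (1-β) log(t/n) + log B(α,β)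
  + O(1/min(α+h, β+t))`, with an explicit constant in the `O`-term depending only on
`α, β`, for `min(α+h, β+t)` sufficiently large. -/
theorem hypergeometric_vs_betaBinomial_capital_ratio (α β : ℝ) (hα : 0 < α) (hβ : 0 < β) :
    ∃ C m₀ : ℝ, 0 < C ∧ ∀ h t : ℕ, m₀ ≤ min (α + h) (β + t) →
      |Real.log ((h.factorial * t.factorial : ℕ) / ((h + t).factorial : ℝ)
            * Beta α β / Beta (α + h) (β + t))
          - (Real.log (h + t) + (1 - α) * Real.log ((h : ℝ) / (h + t))
              + (1 - β) * Real.log ((t : ℝ) / (h + t)) + Real.log (Beta α β))|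
        ≤ C / min (α + h) (β + t) := by
  refine ⟨2 * (12 + (α + 1) ^ 2 + (β + 1) ^ 2 + (α + β + 1) ^ 2), 2 * α + 2 * β + 2,
    by positivity, ?_⟩
  intro h t hm
  have hmin1 : 2 * α + 2 * β + 2 ≤ α + h := le_trans hm (min_le_left _ _)
  have hmin2 : 2 * α + 2 * β + 2 ≤ β + t := le_trans hm (min_le_right _ _)
  have hh1 : (1:ℝ) ≤ h := by linarith
  have ht1 : (1:ℝ) ≤ t := by linarith
  have hhα : α ≤ h := by linarith
  have htβ : β ≤ t := by linarith
  have hh0 : (0:ℝ) < h := by linarith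
  have ht0 : (0:ℝ) < t := by linarith
  have hn0 : (0:ℝ) < (h:ℝ) + t := by linarith
  have hn1 : (1:ℝ) ≤ (h:ℝ) + t := by linarith
  set m := min (α + (h:ℝ)) (β + (t:ℝ)) with hmdef
  have hm0 : (0:ℝ) < m := lt_of_lt_of_le (by linarith) hm
  have hmh : m ≤ 2 * h := le_trans (min_le_left _ _) (by linarith)
  have hmt : m ≤ 2 * t := le_trans (min_le_right _ _) (by linarith)
  have hmn : m ≤ 2 * ((h:ℝ) + t) := le_trans (min_le_left _ _) (by linarith)
  -- Gamma positivity
  have hGh := Real.Gamma_pos_of_pos hh0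
  have hGt := Real.Gamma_pos_of_pos ht0
  have hGn := Real.Gamma_pos_of_pos hn0
  have hαh : (0:ℝ) < α + h := by linarith
  have hβt : (0:ℝ) < β + t := by linarith
  -- factorial = Gamma
  have hfh : ((h.factorial : ℕ) : ℝ) = Real.Gamma ((h:ℝ) + 1) :=
    (Real.Gamma_nat_eq_factorial h).symm
  have hft : ((t.factorial : ℕ) : ℝ) = Real.Gamma ((t:ℝ) + 1) :=
    (Real.Gamma_nat_eq_factorial t).symm
  have hfn : (((h + t).factorial : ℕ) : ℝ) = Real.Gamma ((h:ℝ) + t + 1) := by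
    have := Real.Gamma_nat_eq_factorial (h + t)
    push_cast at this
    exact this.symm
  have hGh1 := Real.Gamma_pos_of_pos (show (0:ℝ) < (h:ℝ) + 1 by linarith)
  have hGt1 := Real.Gamma_pos_of_pos (show (0:ℝ) < (t:ℝ) + 1 by linarith)
  have hGn1 := Real.Gamma_pos_of_pos (show (0:ℝ) < (h:ℝ) + t + 1 by linarith)
  have hBαβ := Beta_pos hα hβ
  have hBht := Beta_pos hαh hβt
  -- the exact error decomposition
  have heq : Real.log (((h.factorial * t.factorial : ℕ) : ℝ) / (((h + t).factorial : ℕ) : ℝ)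
            * Beta α β / Beta (α + h) (β + t))
          - (Real.log ((h:ℝ) + t) + (1 - α) * Real.log ((h : ℝ) / ((h:ℝ) + t))
              + (1 - β) * Real.log ((t : ℝ) / ((h:ℝ) + t)) + Real.log (Beta α β))
      = ((Real.log (Real.Gamma ((h:ℝ) + 1)) - Real.log (Real.Gamma (h:ℝ)) - 1 * Real.log (h:ℝ))
          - (Real.log (Real.Gamma ((h:ℝ) + α)) - Real.log (Real.Gamma (h:ℝ)) - α * Real.log (h:ℝ)))
        + ((Real.log (Real.Gamma ((t:ℝ) + 1)) - Real.log (Real.Gamma (t:ℝ)) - 1 * Real.log (t:ℝ))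
          - (Real.log (Real.Gamma ((t:ℝ) + β)) - Real.log (Real.Gamma (t:ℝ)) - β * Real.log (t:ℝ)))
        + ((Real.log (Real.Gamma (((h:ℝ) + t) + (α + β))) - Real.log (Real.Gamma ((h:ℝ) + t))
              - (α + β) * Real.log ((h:ℝ) + t))
          - (Real.log (Real.Gamma (((h:ℝ) + t) + 1)) - Real.log (Real.Gamma ((h:ℝ) + t))
              - 1 * Real.log ((h:ℝ) + t))) := by
    push_cast
    rw [hfh, hft, hfn]
    rw [Real.log_div (by positivity) (ne_of_gt hBht), Real.log_mul (by positivity) (ne_of_gt hBαβ),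
      Real.log_div (by positivity) (ne_of_gt hGn1),
      Real.log_mul (ne_of_gt hGh1) (ne_of_gt hGt1),
      log_Beta hαh hβt,
      Real.log_div (ne_of_gt hh0) (ne_of_gt hn0), Real.log_div (ne_of_gt ht0) (ne_of_gt hn0),
      show α + (h:ℝ) = (h:ℝ) + α from add_comm _ _,
      show β + (t:ℝ) = (t:ℝ) + β from add_comm _ _,
      show (h:ℝ) + α + ((t:ℝ) + β) = ((h:ℝ) + t) + (α + β) by ring]
    ring
  have B1 := L_bound hh1 one_pos
  have B2 := L_bound hh1 hα
  have B3 := L_bound ht1 one_pos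
  have B4 := L_bound ht1 hβ
  have B5 := L_bound hn1 (add_pos hα hβ)
  have B6 := L_bound hn1 one_pos
  -- conversion to /m
  have conv : ∀ c x : ℝ, 0 ≤ c → 0 < x → m ≤ 2 * x → c / x ≤ 2 * c / m := by
    intro c x hc hx hmx
    rw [div_le_div_iff₀ hx hm0]
    nlinarith [mul_nonneg hc (by linarith : (0:ℝ) ≤ 2 * x - m)]
  have c1 : ((1:ℝ) + 1) ^ 2 / h ≤ 2 * ((1:ℝ) + 1) ^ 2 / m := conv _ _ (by positivity) hh0 hmh
  have c2 : (α + 1) ^ 2 / h ≤ 2 * (α + 1) ^ 2 / m := conv _ _ (by positivity) hh0 hmh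
  have c3 : ((1:ℝ) + 1) ^ 2 / t ≤ 2 * ((1:ℝ) + 1) ^ 2 / m := conv _ _ (by positivity) ht0 hmt
  have c4 : (β + 1) ^ 2 / t ≤ 2 * (β + 1) ^ 2 / m := conv _ _ (by positivity) ht0 hmt
  have c5 : (α + β + 1) ^ 2 / ((h:ℝ) + t) ≤ 2 * (α + β + 1) ^ 2 / m :=
    conv _ _ (by positivity) hn0 hmn
  have c6 : ((1:ℝ) + 1) ^ 2 / ((h:ℝ) + t) ≤ 2 * ((1:ℝ) + 1) ^ 2 / m :=
    conv _ _ (by positivity) hn0 hmn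
  rw [heq]
  have tri : ∀ a b c d e f : ℝ, |a - b + (c - d) + (e - f)|
      ≤ |a| + |b| + |c| + |d| + |e| + |f| := by
    intro a b c d e f
    calc |a - b + (c - d) + (e - f)| ≤ |a - b + (c - d)| + |e - f| := abs_add_le _ _
      _ ≤ |a - b| + |c - d| + |e - f| := by linarith [abs_add_le (a - b) (c - d)]
      _ ≤ |a| + |b| + |c| + |d| + |e| + |f| := by
          linarith [abs_sub a b, abs_sub c d, abs_sub e f]
  refine le_trans (tri _ _ _ _ _ _) ?_
  have final : (2 * ((1:ℝ)+1)^2/m + 2*(α+1)^2/m) + (2*((1:ℝ)+1)^2/m + 2*(β+1)^2/m)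
      + (2*(α+β+1)^2/m + 2*((1:ℝ)+1)^2/m)
      = 2 * (12 + (α + 1) ^ 2 + (β + 1) ^ 2 + (α + β + 1) ^ 2) / m := by ring
  linarith [B1, B2, B3, B4, B5, B6, c1, c2, c3, c4, c5, c6]
end
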